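/- arXiv:2002.09342 — 10 statements merged into one kernel-verified Lean document; each statement's English description precedes it below -/
import Mathlib

section
/- Let X be a compact totally separated space with a Γ-action by homeomorphisms. If the action of Γ on the Boolean algebra of clopen subsets of X has all orbits finite (i.e., X is an odometer), then every continuous Γ-equivariant map from X to a subshift over a finite alphabet has finite image. -/
/-!
The level sets `{x | F x g = a}` are the translates `g • {x | F x 1 = a}` of the finitely many
clopen sets `{x | F x 1 = a}`, so by the odometer hypothesis only finitely many distinct level
sets occur. Since `F x` is determined by which of these sets contain `x`, `F` takes finitely
many values.
-/

open Set

theorem Set.finite_range_of_forall_mem_iff {X Y : Type*} (𝒰 : Set (Set X)) (h𝒰 : 𝒰.Finite)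
    (f : X → Y) (hf : ∀ x y, (∀ U ∈ 𝒰, x ∈ U ↔ y ∈ U) → f x = f y) :
    (range f).Finite := by
  have := h𝒰.to_subtype
  let pattern : X → 𝒰 → Prop := fun x U => x ∈ U.1
  let f' : range pattern → Y := fun φ => f φ.2.choose
  refine (finite_range f').subset ?_
  rintro _ ⟨x, rfl⟩
  have hx : pattern x ∈ range pattern := ⟨x, rfl⟩
  refine ⟨⟨pattern x, hx⟩, hf _ _ fun U hU => ?_⟩
  exact Iff.of_eq (congrFun hx.choose_spec ⟨U, hU⟩)

theorem image_smul_setOf_apply_one_eq {Γ X A : Type*} [Group Γ] [MulAction Γ X]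
    (F : X → Γ → A) (hequiv : ∀ (g : Γ) (x : X) (γ : Γ), F (g • x) γ = F x (g⁻¹ * γ))
    (g : Γ) (a : A) :
    (fun x => g • x) '' {x | F x 1 = a} = {x | F x g = a} := by
  ext x
  have hx : F x g = F (g⁻¹ • x) 1 := by rw [hequiv, inv_inv, mul_one]
  refine ⟨?_, fun h => ⟨g⁻¹ • x, hx.symm.trans h, smul_inv_smul g x⟩⟩
  rintro ⟨y, hy, rfl⟩
  simpa [hequiv] using hy

theorem statement1_general {Γ X A : Type*} [Group Γ] [TopologicalSpace X]
    [MulAction Γ X]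
    [Fintype A] [TopologicalSpace A] [DiscreteTopology A]
    (hodo : ∀ U : Set X, IsClopen U → (Set.range fun g : Γ => (fun x => g • x) '' U).Finite)
    (F : X → Γ → A) (hF : Continuous F)
    (hequiv : ∀ (g : Γ) (x : X) (γ : Γ), F (g • x) γ = F x (g⁻¹ * γ)) :
    (Set.range F).Finite := by
  let U : A → Set X := fun a => {x | F x 1 = a}
  have hU : ∀ a, IsClopen (U a) := fun a =>
    (isClopen_discrete {a}).preimage ((continuous_apply 1).comp hF)
  refine finite_range_of_forall_mem_iff (⋃ a, range fun g : Γ => (fun x => g • x) '' U a)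
    (finite_iUnion fun a => hodo _ (hU a)) F fun x y hxy => funext fun g => ?_
  have hmem := hxy _ (mem_iUnion.2 ⟨F x g, g, rfl⟩)
  simp only [U, image_smul_setOf_apply_one_eq F hequiv, mem_ofPred_eq, true_iff] at hmem
  exact hmem.symm

/-- if `X` is a compact totally separated `Γ`-space which is an odometer
(all orbits on clopen sets are finite), then every continuous equivariant map from `X`
to a subshift over a finite alphabet has finite image. -/
theorem statement1 {Γ X A : Type*} [Group Γ] [TopologicalSpace X] [CompactSpace X]
    [TotallySeparatedSpace X] [MulAction Γ X]
    (hcont : ∀ g : Γ, Continuous fun x : X => g • x)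
    [Fintype A] [TopologicalSpace A] [DiscreteTopology A]
    (hodo : ∀ U : Set X, IsClopen U → (Set.range fun g : Γ => (fun x => g • x) '' U).Finite)
    (S : Set (Γ → A)) (hS : IsClosed S)
    (hSinv : ∀ (g : Γ) (f : Γ → A), f ∈ S → (fun γ => f (g⁻¹ * γ)) ∈ S)
    (F : X → Γ → A) (hF : Continuous F) (hrange : ∀ x, F x ∈ S)
    (hequiv : ∀ (g : Γ) (x : X) (γ : Γ), F (g • x) γ = F x (g⁻¹ * γ)) :
    (Set.range F).Finite :=
  statement1_general hodo F hF hequiv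
end

section
/- Let Γ act by homeomorphisms on a totally separated space X with orbits of unbounded cardinality. Then for every n ≥ 1 the topological full group ⟦Γ⟧ contains a subgroup isomorphic to the symmetric group S_n. In particular, ⟦Γ⟧ satisfies no group law. -/
variable {X : Type*} [TopologicalSpace X]

instance : Group (X ≃ₜ X) where
  mul f g := g.trans f
  one := Homeomorph.refl X
  inv := Homeomorph.symm
  mul_assoc f g h := rfl
  one_mul f := rfl
  mul_one f := rfl
  inv_mul_cancel f := by ext x; exact f.symm_apply_apply x

@[simp] lemma homeo_mul_apply (f g : X ≃ₜ X) (x : X) : (f * g) x = f (g x) := rfl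
@[simp] lemma homeo_inv_apply (f : X ≃ₜ X) (x : X) : (f⁻¹ : X ≃ₜ X) x = f.symm x := rfl

/-- The topological full group of a subgroup `Γ ≤ Homeo(X)`: homeomorphisms locally
coinciding with elements of `Γ`, via a continuous finitely-valued cocycle. -/
def fullGroupOf (Γ : Subgroup (X ≃ₜ X)) : Subgroup (X ≃ₜ X) where
  carrier := {f | ∃ κ : X → (X ≃ₜ X), IsLocallyConstant κ ∧ (Set.range κ).Finite ∧
      (∀ x, κ x ∈ Γ) ∧ ∀ x, f x = κ x x}
  one_mem' := ⟨fun _ => 1, IsLocallyConstant.const 1,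
    (Set.finite_singleton 1).subset (by rintro y ⟨x, rfl⟩; simp),
    fun _ => Γ.one_mem, fun x => rfl⟩
  mul_mem' := by
    rintro f₁ f₂ ⟨κ₁, h₁, hf₁, hm₁, e₁⟩ ⟨κ₂, h₂, hf₂, hm₂, e₂⟩
    refine ⟨fun x => κ₁ (f₂ x) * κ₂ x,
      ((h₁.comp_continuous f₂.continuous).mul h₂),
      (Set.Finite.image2 (· * ·) hf₁ hf₂).subset ?_,
      fun x => Γ.mul_mem (hm₁ _) (hm₂ _), fun x => ?_⟩
    · rintro y ⟨x, rfl⟩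
      exact Set.mem_image2_of_mem (Set.mem_range_self _) (Set.mem_range_self _)
    · have h0 : (f₁ * f₂) x = f₁ (f₂ x) := rfl
      rw [h0, homeo_mul_apply, ← e₂ x]
      exact e₁ (f₂ x)
  inv_mem' := by
    rintro f ⟨κ, h, hf, hm, e⟩
    refine ⟨fun x => (κ (f.symm x))⁻¹,
      (h.comp_continuous f.symm.continuous).comp Inv.inv,
      ((hf.image Inv.inv).subset ?_),
      fun x => Γ.inv_mem (hm _), fun x => ?_⟩
    · rintro y ⟨x, rfl⟩
      exact ⟨κ (f.symm x), Set.mem_range_self _, rfl⟩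
    · have h1 := e (f.symm x)
      rw [f.apply_symm_apply] at h1
      exact (((κ (f.symm x)).symm_apply_eq).mpr h1).symm

/-!
Pick `n` distinct points `gᵢ x` of one orbit. Total separation yields a clopen `V ∋ x` whose
translates `gᵢ V` are pairwise disjoint, and `σ ∈ Sₙ` acts by `gᵢ v ↦ g_{σ i} v` on `⋃ gᵢ V` and
trivially elsewhere: on a finite clopen partition this map agrees with `1` and the elements
`g_{σ i} gᵢ⁻¹` of `Γ`, so it lies in `⟦Γ⟧`. A word `w = mk l ≠ 1` acts nontrivially on the finite
set of its suffixes `mk s`: extending the partial left multiplication by each generator to a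
permutation of that set, the word carries `1` to `w`; so `w` is not a law of some `Sₙ ≤ ⟦Γ⟧`.
-/

open Function Set

lemma IsLocallyConstant.continuous_eval {Y : Type*} [TopologicalSpace Y] {κ : X → X ≃ₜ Y}
    (hκ : IsLocallyConstant κ) :
    Continuous fun z => κ z z :=
  continuous_iff_continuousAt.2 fun z =>
    (continuousAt_congr <| (hκ.eventually_eq z).mono fun y hy => by simp only [hy]).2
      (κ z).continuous.continuousAt

lemma exists_isLocallyConstant_of_eqOn {ι : Type*} [Finite ι] {C : ι → Set X}
    (hC : ∀ i, IsClopen (C i)) (hdisj : Pairwise (Disjoint on C)) (γ : ι → X ≃ₜ X) {f : X → X}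
    (hf : ∀ i, EqOn f (γ i) (C i)) (hf₀ : EqOn f id (⋃ i, C i)ᶜ) :
    ∃ κ : X → X ≃ₜ X, IsLocallyConstant κ ∧ (∀ z, κ z ∈ insert 1 (range γ)) ∧
      ∀ z, f z = κ z z := by
  classical
  let κ : X → X ≃ₜ X := fun z => if h : ∃ i, z ∈ C i then γ h.choose else 1
  have hκC : ∀ i, ∀ z ∈ C i, κ z = γ i := fun i z hz => by
    have h : ∃ i, z ∈ C i := ⟨i, hz⟩
    simp only [κ, dif_pos h, hdisj.eq (not_disjoint_iff.2 ⟨z, h.choose_spec, hz⟩)]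
  have hκ₀ : ∀ z ∉ ⋃ i, C i, κ z = 1 := fun z hz => dif_neg (by rwa [mem_iUnion] at hz)
  refine ⟨κ, (IsLocallyConstant.iff_exists_open κ).2 fun z => ?_, fun z => ?_, fun z => ?_⟩ <;>
    by_cases hz : z ∈ ⋃ i, C i
  · obtain ⟨i, hi⟩ := mem_iUnion.1 hz
    exact ⟨C i, (hC i).isOpen, hi, fun z' hz' => by rw [hκC i z' hz', hκC i z hi]⟩
  · exact ⟨_, (isClosed_iUnion_of_finite fun i => (hC i).isClosed).isOpen_compl, hz,
      fun z' hz' => by rw [hκ₀ z' hz', hκ₀ z hz]⟩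
  · obtain ⟨i, hi⟩ := mem_iUnion.1 hz
    exact hκC i z hi ▸ mem_insert_of_mem _ (mem_range_self i)
  · exact hκ₀ z hz ▸ mem_insert _ _
  · obtain ⟨i, hi⟩ := mem_iUnion.1 hz
    rw [hf i hi, hκC i z hi]
  · rw [hf₀ hz, hκ₀ z hz]
    rfl

section Translates

variable {ι : Type*} (g : ι → X ≃ₜ X) {V : Set X}

noncomputable def translatesEquiv (hV : Pairwise (Disjoint on fun i => g i '' V)) :
    ι × V ≃ ↥(⋃ i, g i '' V) :=
  Equiv.ofBijective (fun p => ⟨g p.1 p.2, mem_iUnion.2 ⟨p.1, mem_image_of_mem _ p.2.2⟩⟩) <| by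
    refine ⟨fun ⟨i, v⟩ ⟨j, w⟩ h => ?_, fun ⟨z, hz⟩ => ?_⟩
    · have hz : g i v = g j w := congrArg Subtype.val h
      obtain rfl : i = j := by
        by_contra hij
        exact (hV hij).ne_of_mem (mem_image_of_mem _ v.2) (mem_image_of_mem _ w.2) hz
      rw [Subtype.ext ((g i).injective hz)]
    · obtain ⟨i, v, hv, rfl⟩ := mem_iUnion.1 hz
      exact ⟨(i, ⟨v, hv⟩), rfl⟩

open Classical in
noncomputable def translatePerm (hV : Pairwise (Disjoint on fun i => g i '' V)) :
    Equiv.Perm ι →* Equiv.Perm X :=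
  Equiv.Perm.ofSubtype.comp <| (translatesEquiv g hV).permCongrHom.toMonoidHom.comp <|
    MonoidHom.mk' (fun σ => σ.prodCongr (Equiv.refl V)) fun _ _ => rfl

variable {g}

lemma translatePerm_apply_image (hV : Pairwise (Disjoint on fun i => g i '' V))
    (σ : Equiv.Perm ι) (i : ι) {v : X} (hv : v ∈ V) :
    translatePerm g hV σ (g i v) = g (σ i) v := by
  have hmem : g i v ∈ ⋃ i, g i '' V := mem_iUnion.2 ⟨i, mem_image_of_mem (g i) hv⟩
  have he : (translatesEquiv g hV).symm ⟨g i v, hmem⟩ = (i, ⟨v, hv⟩) :=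
    (translatesEquiv g hV).symm_apply_eq.2 rfl
  classical
  rw [translatePerm, MonoidHom.comp_apply, Equiv.Perm.ofSubtype_apply_of_mem _ hmem]
  show ((translatesEquiv g hV).permCongr (σ.prodCongr (Equiv.refl V)) ⟨g i v, hmem⟩ : X) = _
  rw [Equiv.permCongr_apply, he]
  rfl

lemma translatePerm_apply_of_notMem (hV : Pairwise (Disjoint on fun i => g i '' V))
    (σ : Equiv.Perm ι) {z : X} (hz : z ∉ ⋃ i, g i '' V) : translatePerm g hV σ z = z := by
  classical
  exact Equiv.Perm.ofSubtype_apply_of_not_mem _ hz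

lemma exists_isLocallyConstant_translatePerm [Finite ι]
    (hV : Pairwise (Disjoint on fun i => g i '' V)) (hVc : IsClopen V) (σ : Equiv.Perm ι) :
    ∃ κ : X → X ≃ₜ X, IsLocallyConstant κ ∧
      (∀ z, κ z ∈ insert 1 (range fun i => g (σ i) * (g i)⁻¹)) ∧
      ∀ z, translatePerm g hV σ z = κ z z :=
  exists_isLocallyConstant_of_eqOn
    (fun i => (g i).image_eq_preimage_symm V ▸ hVc.preimage (g i).symm.continuous) hV _
    (fun i => by
      rintro _ ⟨v, hv, rfl⟩
      simp [translatePerm_apply_image hV σ i hv])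
    fun _ hz => translatePerm_apply_of_notMem hV σ hz

end Translates

def MonoidHom.liftHomeomorph {G : Type*} [Group G] (ρ : G →* Equiv.Perm X)
    (hρ : ∀ a, Continuous (ρ a)) : G →* (X ≃ₜ X) where
  toFun a :=
    { toEquiv := ρ a
      continuous_toFun := hρ a
      continuous_invFun := (map_inv ρ a ▸ hρ a⁻¹ :) }
  map_one' := Homeomorph.ext fun z => by simp
  map_mul' a b := Homeomorph.ext fun z => by simp

lemma exists_isClopen_pairwise_disjoint_image [TotallySeparatedSpace X] {ι : Type*} [Finite ι]
    {g : ι → X ≃ₜ X} {x : X} (hinj : Injective fun i => g i x) :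
    ∃ V : Set X, IsClopen V ∧ x ∈ V ∧ Pairwise (Disjoint on fun i => g i '' V) := by
  choose C hC hmem hnot using
    fun i j (h : i ≠ j) => exists_isClopen_of_totally_separated (hinj.ne h)
  let W i j (h : i ≠ j) := g i ⁻¹' C i j h ∩ g j ⁻¹' (C i j h)ᶜ
  refine ⟨⋂ (i) (j) (h : i ≠ j), W i j h,
    isClopen_iInter_of_finite fun i => isClopen_iInter_of_finite fun j =>
      isClopen_iInter_of_finite fun h =>
        ((hC i j h).preimage (g i).continuous).inter ((hC i j h).compl.preimage (g j).continuous),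
    mem_iInter.2 fun i => mem_iInter.2 fun j => mem_iInter.2 fun h => ⟨hmem i j h, hnot i j h⟩,
    fun i j h => ?_⟩
  have hV : (⋂ (i) (j) (h : i ≠ j), W i j h) ⊆ W i j h :=
    (iInter_subset _ i).trans <| (iInter_subset _ j).trans <| iInter_subset _ h
  exact disjoint_compl_right.mono (image_subset_iff.2 (hV.trans inter_subset_left))
    (image_subset_iff.2 (hV.trans inter_subset_right))

theorem exists_injective_perm_hom_fullGroupOf [TotallySeparatedSpace X] (Γ : Subgroup (X ≃ₜ X))
    {ι : Type*} [Finite ι] {g : ι → X ≃ₜ X} (hgΓ : ∀ i, g i ∈ Γ) {x : X}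
    (hinj : Injective fun i => g i x) :
    ∃ φ : Equiv.Perm ι →* fullGroupOf Γ, Injective φ := by
  obtain ⟨V, hVc, hxV, hV⟩ := exists_isClopen_pairwise_disjoint_image hinj
  choose κ hκ hκγ hρκ using exists_isLocallyConstant_translatePerm hV hVc
  have hcont σ : Continuous (translatePerm g hV σ) := by
    simpa only [← funext (hρκ σ)] using (hκ σ).continuous_eval
  have hmem σ : (translatePerm g hV).liftHomeomorph hcont σ ∈ fullGroupOf Γ := by
    refine ⟨κ σ, hκ σ, ((finite_range _).insert 1).subset (range_subset_iff.2 (hκγ σ)),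
      fun z => ?_, hρκ σ⟩
    rcases hκγ σ z with h | ⟨i, h⟩
    · exact h ▸ Γ.one_mem
    · exact h ▸ Γ.mul_mem (hgΓ _) (Γ.inv_mem (hgΓ i))
  refine ⟨((translatePerm g hV).liftHomeomorph hcont).codRestrict _ hmem, fun σ τ h => ?_⟩
  ext i
  have h := congrArg (fun f : fullGroupOf Γ => (f : X ≃ₜ X) (g i x)) h
  simp only [MonoidHom.codRestrict_apply] at h
  exact hinj (by simpa [MonoidHom.liftHomeomorph, translatePerm_apply_image hV _ i hxV] using h)

lemma exists_injective_orbit_family (Γ : Subgroup (X ≃ₜ X))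
    (horb : ∀ n : ℕ, ∃ (x : X) (t : Finset X),
      (↑t : Set X) ⊆ Set.range (fun g : Γ => (g : X ≃ₜ X) x) ∧ n ≤ t.card)
    (ι : Type*) [Fintype ι] :
    ∃ (x : X) (g : ι → X ≃ₜ X), (∀ i, g i ∈ Γ) ∧ Injective fun i => g i x := by
  obtain ⟨x, t, hsub, hcard⟩ := horb (Fintype.card ι)
  obtain ⟨e⟩ := Function.Embedding.nonempty_of_card_le (α := ι) (β := t) (by simpa using hcard)
  choose γ hγ using fun i => hsub (e i).2
  exact ⟨x, fun i => γ i, fun i => (γ i).2,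
    fun i j h => e.injective (Subtype.ext ((hγ i).symm.trans (h.trans (hγ j))))⟩

lemma FreeGroup.comp_lift {α G H : Type*} [Group G] [Group H] (f : G →* H) (π : α → G) :
    f.comp (lift π) = lift (f ∘ π) :=
  ext_hom _ _ fun i => by simp

lemma Equiv.Perm.exists_eq_mul_left_of_mem {G : Type*} [Group G] (T : Set G) [Finite T] (a : G) :
    ∃ π : Equiv.Perm T, (∀ t : T, a * t ∈ T → (π t : G) = a * t) ∧
      ∀ t : T, a⁻¹ * t ∈ T → (π⁻¹ t : G) = a⁻¹ * t := by
  classical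
  let e : {t : T // a * t ∈ T} ≃ {t : T // a⁻¹ * t ∈ T} :=
    { toFun t := ⟨⟨a * t, t.2⟩, by simp⟩
      invFun t := ⟨⟨a⁻¹ * t, t.2⟩, by simp⟩
      left_inv t := by simp
      right_inv t := by simp }
  have hπ (t : T) (h : a * t ∈ T) : (e.extendSubtype t : G) = a * t := by
    rw [e.extendSubtype_apply_of_mem t h]
    rfl
  refine ⟨e.extendSubtype, hπ, fun t h => ?_⟩
  have ht : e.extendSubtype ⟨a⁻¹ * t, h⟩ = t :=
    Subtype.ext ((hπ _ (by simp)).trans (mul_inv_cancel_left a t))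
  rw [Equiv.Perm.inv_eq_iff_eq.2 ht.symm]

theorem FreeGroup.exists_perm_lift_ne_one {α : Type*} {w : FreeGroup α} (hw : w ≠ 1) :
    ∃ (N : ℕ) (π : α → Equiv.Perm (Fin N)), lift π w ≠ 1 := by
  classical
  let T : Set (FreeGroup α) := mk '' {s | s ∈ w.toWord.tails}
  have : Finite T := (w.toWord.tails.finite_toSet.image _).to_subtype
  have hT {s} (hs : s <:+ w.toWord) : mk s ∈ T := ⟨s, (List.mem_tails _ _).2 hs, rfl⟩
  choose π hπ hπinv using fun i => Equiv.Perm.exists_eq_mul_left_of_mem T (of i)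
  have hletter (c : α × Bool) (t : T) (h : mk [c] * t ∈ T) :
      (lift π (mk [c]) t : FreeGroup α) = mk [c] * t := by
    obtain ⟨i, _ | _⟩ := c
    · have hinv : mk [(i, false)] = (of i)⁻¹ := by rw [of, inv_mk]; rfl
      rw [hinv] at h ⊢
      simpa using hπinv i t h
    · exact hπ i t h
  have htrace (s : List (α × Bool)) (hs : s <:+ w.toWord) :
      (lift π (mk s) ⟨1, hT List.nil_suffix⟩ : FreeGroup α) = mk s := by
    induction s with
    | nil => rfl
    | cons c s ih =>
      have hs' := (List.suffix_cons c s).trans hs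
      rw [← List.singleton_append, ← mul_mk, _root_.map_mul, Equiv.Perm.mul_apply,
        show lift π (mk s) ⟨1, _⟩ = ⟨mk s, hT hs'⟩ from Subtype.ext (ih hs'), hletter]
      exact mul_mk ▸ hT hs
  let e := Finite.equivFin T
  refine ⟨Nat.card T, e.permCongrHom.toMonoidHom ∘ π, fun h => hw ?_⟩
  rw [← comp_lift e.permCongrHom.toMonoidHom, MonoidHom.comp_apply, MulEquiv.coe_toMonoidHom,
    map_eq_one_iff _ e.permCongrHom.injective] at h
  simpa [mk_toWord, h] using (htrace _ List.suffix_rfl).symm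

/-- if `Γ ≤ Homeo(X)` has orbits of unbounded cardinality on a totally
separated space, then for every `n` the topological full group contains a copy of the
symmetric group `S_n`; in particular it satisfies no group law. -/
theorem statement2 {X : Type*} [TopologicalSpace X] [TotallySeparatedSpace X]
    (Γ : Subgroup (X ≃ₜ X))
    (horb : ∀ n : ℕ, ∃ (x : X) (t : Finset X),
      (↑t : Set X) ⊆ Set.range (fun g : Γ => (g : X ≃ₜ X) x) ∧ n ≤ t.card) :
    (∀ n : ℕ, 1 ≤ n → ∃ ι : Equiv.Perm (Fin n) →* ↥(fullGroupOf Γ), Function.Injective ι) ∧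
    ∀ (k : ℕ) (w : FreeGroup (Fin k)), w ≠ 1 →
      ∃ g : Fin k → ↥(fullGroupOf Γ), (FreeGroup.lift g) w ≠ 1 := by
  have hperm (n : ℕ) : ∃ ι : Equiv.Perm (Fin n) →* fullGroupOf Γ, Injective ι := by
    obtain ⟨x, g, hgΓ, hinj⟩ := exists_injective_orbit_family Γ horb (Fin n)
    exact exists_injective_perm_hom_fullGroupOf Γ hgΓ hinj
  refine ⟨fun n _ => hperm n, fun k w hw => ?_⟩
  obtain ⟨N, π, hπ⟩ := FreeGroup.exists_perm_lift_ne_one hw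
  obtain ⟨ι, hι⟩ := hperm N
  refine ⟨ι ∘ π, fun h => hπ (hι ?_)⟩
  rwa [map_one, ← MonoidHom.comp_apply, FreeGroup.comp_lift]
end

section
/- Let X be totally separated and Γ ≤ Homeo(X). Then the topological full group ⟦Γ⟧ acts ∞-transitively on every Γ-orbit: for every n, it acts transitively on n-tuples of distinct points of any Γ-orbit. Moreover the derived subgroup ⟦Γ⟧' acts (n−2)-transitively on every Γ-orbit of cardinality at least n. -/
/-! Given `a ≠ b` in one `Γ`-orbit, say `b = γ a` with `γ ∈ Γ`, total separatedness yields a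
clopen neighbourhood `U` of `a` with `U`, `γ U` disjoint from each other and from any prescribed
finite set `S`. The homeomorphism acting as `γ` on `U`, as `γ⁻¹` on `γ U` and as the identity
elsewhere lies in `⟦Γ⟧`, moves `a` to `b` and fixes `S`; adding the points of a tuple one at a
time gives transitivity on tuples. For `⟦Γ⟧'` one also needs a third point `c` of the orbit
outside `S ∪ {a, b}`, which exists while `|S| < n - 2` in an orbit of at least `n` points: if
`σ ∈ ⟦Γ⟧` moves `a` to `b` fixing `S` and `c`, and `τ ∈ ⟦Γ⟧` moves `c` to `a` fixing `S`, then
`⁅σ, τ⁆` moves `a` to `b` fixing `S`. -/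

variable {X : Type*} [TopologicalSpace X]

theorem IsLocallyConstant.ite_mem {Y : Type*} {U : Set X} [DecidablePred (· ∈ U)]
    (hU : IsClopen U) {f g : X → Y} (hf : IsLocallyConstant f) (hg : IsLocallyConstant g) :
    IsLocallyConstant fun x => if x ∈ U then f x else g x := by
  rw [IsLocallyConstant.iff_eventually_eq]
  intro x
  by_cases hx : x ∈ U
  · filter_upwards [hU.isOpen.mem_nhds hx, hf.eventually_eq x] with y hy hfy
    simp [hx, hy, hfy]
  · filter_upwards [hU.compl.isOpen.mem_nhds hx, hg.eventually_eq x] with y hy hgy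
    simp [hx, Set.notMem_of_mem_compl hy, hgy]

theorem IsLocallyConstant.continuous_apply_self {Y F : Type*} [TopologicalSpace Y]
    [FunLike F X Y] [ContinuousMapClass F X Y] {κ : X → F} (hκ : IsLocallyConstant κ) :
    Continuous fun x => κ x x := by
  refine continuous_iff_continuousAt.mpr fun x => (map_continuous (κ x)).continuousAt.congr ?_
  filter_upwards [hκ.eventually_eq x] with y hy
  rw [hy]

section ClopenSwap

variable (γ : X ≃ₜ X) (U : Set X)

open Classical in
noncomputable def clopenSwapCocycle (x : X) : X ≃ₜ X :=
  if x ∈ U then γ else if x ∈ γ '' U then γ⁻¹ else 1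

variable {γ U}

theorem clopenSwapCocycle_of_mem {x : X} (hx : x ∈ U) : clopenSwapCocycle γ U x = γ := by
  simp [clopenSwapCocycle, hx]

theorem clopenSwapCocycle_apply_of_mem (hd : Disjoint U (γ '' U)) {x : X} (hx : x ∈ U) :
    clopenSwapCocycle γ U (γ x) = γ⁻¹ := by
  have hγx : γ x ∈ γ '' U := Set.mem_image_of_mem γ hx
  simp [clopenSwapCocycle, hγx, Set.disjoint_right.mp hd hγx]

theorem clopenSwapCocycle_of_notMem {x : X} (hx : x ∉ U) (hγx : x ∉ γ '' U) :
    clopenSwapCocycle γ U x = 1 := by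
  simp [clopenSwapCocycle, hx, hγx]

theorem clopenSwapCocycle_mem_of_mem {Γ : Subgroup (X ≃ₜ X)} (hγ : γ ∈ Γ) (x : X) :
    clopenSwapCocycle γ U x ∈ Γ := by
  unfold clopenSwapCocycle
  split_ifs
  exacts [hγ, Γ.inv_mem hγ, Γ.one_mem]

theorem finite_range_clopenSwapCocycle : (Set.range (clopenSwapCocycle γ U)).Finite := by
  refine (Set.toFinite {γ, γ⁻¹, 1}).subset ?_
  rintro _ ⟨x, rfl⟩
  unfold clopenSwapCocycle
  split_ifs <;> simp

open Classical in
theorem isLocallyConstant_clopenSwapCocycle (hU : IsClopen U) :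
    IsLocallyConstant (clopenSwapCocycle γ U) :=
  .ite_mem hU (.const γ) <|
    .ite_mem ⟨γ.isClosed_image.mpr hU.1, γ.isOpen_image.mpr hU.2⟩ (.const γ⁻¹) (.const 1)

theorem clopenSwapCocycle_involutive (hd : Disjoint U (γ '' U)) :
    Function.Involutive fun x => clopenSwapCocycle γ U x x := by
  intro x
  by_cases hx : x ∈ U
  · simp only [clopenSwapCocycle_of_mem hx, clopenSwapCocycle_apply_of_mem hd hx]
    exact γ.symm_apply_apply x
  by_cases hγx : x ∈ γ '' U
  · obtain ⟨u, hu, rfl⟩ := hγx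
    simp only [clopenSwapCocycle_apply_of_mem hd hu, homeo_inv_apply, γ.symm_apply_apply,
      clopenSwapCocycle_of_mem hu]
  · simp only [clopenSwapCocycle_of_notMem hx hγx, Homeomorph.one_apply]

variable (γ)

noncomputable def clopenSwap (hU : IsClopen U) (hd : Disjoint U (γ '' U)) : X ≃ₜ X where
  toEquiv := (clopenSwapCocycle_involutive hd).toPerm
  continuous_toFun := (isLocallyConstant_clopenSwapCocycle hU).continuous_apply_self
  continuous_invFun := (isLocallyConstant_clopenSwapCocycle hU).continuous_apply_self

variable {γ}

theorem clopenSwap_apply (hU : IsClopen U) (hd : Disjoint U (γ '' U)) (x : X) :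
    clopenSwap γ hU hd x = clopenSwapCocycle γ U x x := rfl

theorem clopenSwap_mem_fullGroupOf {Γ : Subgroup (X ≃ₜ X)} (hγ : γ ∈ Γ) (hU : IsClopen U)
    (hd : Disjoint U (γ '' U)) : clopenSwap γ hU hd ∈ fullGroupOf Γ :=
  ⟨clopenSwapCocycle γ U, isLocallyConstant_clopenSwapCocycle hU,
    finite_range_clopenSwapCocycle, clopenSwapCocycle_mem_of_mem hγ, clopenSwap_apply hU hd⟩

end ClopenSwap

theorem exists_isClopen_mem_disjoint_finset [TotallySeparatedSpace X] {a : X} {S : Finset X}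
    (ha : a ∉ S) : ∃ C : Set X, IsClopen C ∧ a ∈ C ∧ Disjoint C S := by
  have hsep : ∀ s ∈ S, ∃ C : Set X, IsClopen C ∧ a ∈ C ∧ s ∉ C := fun s hs =>
    exists_isClopen_of_totally_separated (ne_of_mem_of_not_mem hs ha).symm
  choose! C hC haC hsC using hsep
  refine ⟨⋂ s ∈ S, C s, isClopen_biInter_finset hC, Set.mem_iInter₂.mpr haC, ?_⟩
  exact Set.disjoint_left.mpr fun s hs hsS => hsC s hsS (Set.mem_iInter₂.mp hs s hsS)

def orbitOf (Γ : Subgroup (X ≃ₜ X)) (x₀ : X) : Set X :=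
  Set.range fun g : Γ => (g : X ≃ₜ X) x₀

theorem exists_mem_apply_eq_of_mem_orbitOf {Γ : Subgroup (X ≃ₜ X)} {x₀ a b : X}
    (ha : a ∈ orbitOf Γ x₀) (hb : b ∈ orbitOf Γ x₀) : ∃ γ ∈ Γ, γ a = b := by
  obtain ⟨g, rfl⟩ := ha
  obtain ⟨h, rfl⟩ := hb
  exact ⟨(h : X ≃ₜ X) * (g : X ≃ₜ X)⁻¹, Γ.mul_mem h.2 (Γ.inv_mem g.2), by simp⟩

theorem apply_mem_orbitOf {Γ : Subgroup (X ≃ₜ X)} {f : X ≃ₜ X} (hf : f ∈ fullGroupOf Γ)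
    {x₀ a : X} (ha : a ∈ orbitOf Γ x₀) : f a ∈ orbitOf Γ x₀ := by
  obtain ⟨κ, -, -, hκΓ, hfκ⟩ := hf
  obtain ⟨g, rfl⟩ := ha
  exact ⟨⟨κ ((g : X ≃ₜ X) x₀) * g, Γ.mul_mem (hκΓ _) g.2⟩, (hfκ _).symm⟩

theorem exists_mem_fullGroupOf_apply_eq [TotallySeparatedSpace X] {Γ : Subgroup (X ≃ₜ X)}
    {x₀ a b : X} (ha : a ∈ orbitOf Γ x₀) (hb : b ∈ orbitOf Γ x₀) (hab : a ≠ b) {S : Finset X}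
    (haS : a ∉ S) (hbS : b ∉ S) : ∃ f ∈ fullGroupOf Γ, f a = b ∧ ∀ s ∈ S, f s = s := by
  classical
  obtain ⟨γ, hγ, rfl⟩ := exists_mem_apply_eq_of_mem_orbitOf ha hb
  obtain ⟨D, hD, haD, hDS⟩ :=
    exists_isClopen_mem_disjoint_finset (a := a) (S := insert (γ a) S) (by simp [hab, haS])
  obtain ⟨E, hE, hγaE, hES⟩ := exists_isClopen_mem_disjoint_finset hbS
  have hU : IsClopen (D ∩ γ ⁻¹' (E \ D)) := hD.inter ((hE.diff hD).preimage γ.continuous)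
  have hγU : γ '' (D ∩ γ ⁻¹' (E \ D)) ⊆ E \ D := by
    rintro _ ⟨x, hx, rfl⟩
    exact hx.2
  have hd : Disjoint (D ∩ γ ⁻¹' (E \ D)) (γ '' (D ∩ γ ⁻¹' (E \ D))) :=
    Set.disjoint_sdiff_right.mono Set.inter_subset_left hγU
  have haU : a ∈ D ∩ γ ⁻¹' (E \ D) :=
    ⟨haD, hγaE, fun h => Set.disjoint_left.mp hDS h (by simp)⟩
  refine ⟨clopenSwap γ hU hd, clopenSwap_mem_fullGroupOf hγ hU hd, ?_, fun s hs => ?_⟩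
  · rw [clopenSwap_apply, clopenSwapCocycle_of_mem haU]
  · have hsU : s ∉ D ∩ γ ⁻¹' (E \ D) := fun h => Set.disjoint_left.mp hDS h.1 (by simp [hs])
    have hsγU : s ∉ γ '' (D ∩ γ ⁻¹' (E \ D)) := fun h => Set.disjoint_left.mp hES (hγU h).1 hs
    rw [clopenSwap_apply, clopenSwapCocycle_of_notMem hsU hsγU, Homeomorph.one_apply]

theorem Homeomorph.inv_apply_eq_self {f : X ≃ₜ X} {x : X} (hx : f x = x) : f⁻¹ x = x :=
  f.symm_apply_eq.mpr hx.symm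

open scoped commutatorElement in
theorem exists_mem_commutator_fullGroupOf_apply_eq [TotallySeparatedSpace X]
    {Γ : Subgroup (X ≃ₜ X)} {x₀ a b c : X} (ha : a ∈ orbitOf Γ x₀) (hb : b ∈ orbitOf Γ x₀)
    (hc : c ∈ orbitOf Γ x₀) (hab : a ≠ b) (hac : a ≠ c) (hbc : b ≠ c) {S : Finset X}
    (haS : a ∉ S) (hbS : b ∉ S) (hcS : c ∉ S) :
    ∃ f ∈ ⁅fullGroupOf Γ, fullGroupOf Γ⁆, f a = b ∧ ∀ s ∈ S, f s = s := by
  classical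
  obtain ⟨σ, hσ, hσa, hσS⟩ := exists_mem_fullGroupOf_apply_eq ha hb hab (S := insert c S)
    (by simp [hac, haS]) (by simp [hbc, hbS])
  obtain ⟨τ, hτ, hτc, hτS⟩ := exists_mem_fullGroupOf_apply_eq hc ha hac.symm hcS haS
  have hτa : τ⁻¹ a = c := τ.symm_apply_eq.mpr hτc.symm
  have hσc : σ⁻¹ c = c := Homeomorph.inv_apply_eq_self (hσS c (S.mem_insert_self c))
  refine ⟨⁅σ, τ⁆, Subgroup.commutator_mem_commutator hσ hτ, ?_, fun s hs => ?_⟩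
  · simp only [commutatorElement_def, homeo_mul_apply, hτa, hσc, hτc, hσa]
  · have hσs : σ s = s := hσS s (S.mem_insert_of_mem hs)
    simp only [commutatorElement_def, homeo_mul_apply, Homeomorph.inv_apply_eq_self (hτS s hs),
      Homeomorph.inv_apply_eq_self hσs, hτS s hs, hσs]

theorem exists_mem_forall_apply_eq_of_exists_fixing (G : Subgroup (X ≃ₜ X)) {O : Set X}
    (hGO : ∀ g ∈ G, ∀ a ∈ O, g a ∈ O) {m : ℕ}
    (hstep : ∀ a ∈ O, ∀ b ∈ O, a ≠ b → ∀ S : Finset X, S.card < m → a ∉ S → b ∉ S →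
      ∃ g ∈ G, g a = b ∧ ∀ s ∈ S, g s = s) :
    ∀ {n : ℕ}, n ≤ m → ∀ {x y : Fin n → X}, Function.Injective x → Function.Injective y →
      (∀ i, x i ∈ O) → (∀ i, y i ∈ O) → ∃ f ∈ G, ∀ i, f (x i) = y i := by
  classical
  intro n
  induction n with
  | zero => exact fun _ _ _ _ _ _ _ => ⟨1, G.one_mem, finZeroElim⟩
  | succ n ih =>
    intro hn x y hx hy hxO hyO
    obtain ⟨f, hf, hfxy⟩ := ih (by omega) (hx.comp (Fin.castSucc_injective n))
      (hy.comp (Fin.castSucc_injective n)) (fun i => hxO _) (fun i => hyO _)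
    let S := Finset.univ.image fun i : Fin n => y i.castSucc
    have hS : S.card < m := Finset.card_image_le.trans_lt (by simpa using hn)
    have haS : f (x (Fin.last n)) ∉ S := by
      simp only [S, Finset.mem_image, Finset.mem_univ, true_and, not_exists]
      intro i hi
      exact (Fin.castSucc_lt_last i).ne (hx (f.injective ((hfxy i).trans hi)))
    have hbS : y (Fin.last n) ∉ S := by
      simp only [S, Finset.mem_image, Finset.mem_univ, true_and, not_exists]
      exact fun i hi => (Fin.castSucc_lt_last i).ne (hy hi)
    by_cases hab : f (x (Fin.last n)) = y (Fin.last n)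
    · exact ⟨f, hf, Fin.lastCases hab hfxy⟩
    obtain ⟨g, hg, hga, hgS⟩ :=
      hstep _ (hGO f hf _ (hxO _)) _ (hyO _) hab S hS haS hbS
    refine ⟨g * f, G.mul_mem hg hf, Fin.lastCases hga fun i => ?_⟩
    exact (congrArg g (hfxy i)).trans (hgS _ (Finset.mem_image_of_mem _ (Finset.mem_univ i)))

theorem exists_mem_commutator_fullGroupOf_apply_eq_of_card_lt [TotallySeparatedSpace X]
    {Γ : Subgroup (X ≃ₜ X)} {x₀ : X} {t : Finset X} (ht : ↑t ⊆ orbitOf Γ x₀) {a b : X}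
    (ha : a ∈ orbitOf Γ x₀) (hb : b ∈ orbitOf Γ x₀) (hab : a ≠ b) {S : Finset X}
    (hS : S.card + 2 < t.card) (haS : a ∉ S) (hbS : b ∉ S) :
    ∃ f ∈ ⁅fullGroupOf Γ, fullGroupOf Γ⁆, f a = b ∧ ∀ s ∈ S, f s = s := by
  classical
  have hcard : (insert a (insert b S)).card < t.card :=
    (Finset.card_insert_le _ _).trans_lt <|
      (Nat.succ_le_succ (Finset.card_insert_le _ _)).trans_lt hS
  obtain ⟨c, hct, hc⟩ := Finset.exists_mem_notMem_of_card_lt_card hcard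
  simp only [Finset.mem_insert, not_or] at hc
  obtain ⟨hca, hcb, hcS⟩ := hc
  exact exists_mem_commutator_fullGroupOf_apply_eq ha hb (ht hct) hab (Ne.symm hca)
    (Ne.symm hcb) haS hbS hcS

/-- the topological full group of `Γ ≤ Homeo(X)` (`X` totally separated)
acts `∞`-transitively on each `Γ`-orbit, and its derived subgroup acts `(n-2)`-transitively
on each orbit of cardinality at least `n`. -/
theorem statement3 {X : Type*} [TopologicalSpace X] [TotallySeparatedSpace X]
    (Γ : Subgroup (X ≃ₜ X)) :
    (∀ (n : ℕ) (x₀ : X) (x y : Fin n → X), Function.Injective x → Function.Injective y →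
      (∀ i, x i ∈ Set.range (fun g : Γ => (g : X ≃ₜ X) x₀)) →
      (∀ i, y i ∈ Set.range (fun g : Γ => (g : X ≃ₜ X) x₀)) →
      ∃ f ∈ fullGroupOf Γ, ∀ i, f (x i) = y i) ∧
    ∀ (n : ℕ) (x₀ : X),
      (∃ t : Finset X, (↑t : Set X) ⊆ Set.range (fun g : Γ => (g : X ≃ₜ X) x₀) ∧ n ≤ t.card) →
      ∀ (x y : Fin (n - 2) → X), Function.Injective x → Function.Injective y →
      (∀ i, x i ∈ Set.range (fun g : Γ => (g : X ≃ₜ X) x₀)) →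
      (∀ i, y i ∈ Set.range (fun g : Γ => (g : X ≃ₜ X) x₀)) →
      ∃ f ∈ ⁅fullGroupOf Γ, fullGroupOf Γ⁆, ∀ i, f (x i) = y i := by
  refine ⟨fun n x₀ x y hx hy hxO hyO => ?_, fun n x₀ ⟨t, ht, hn⟩ x y hx hy hxO hyO => ?_⟩
  · exact exists_mem_forall_apply_eq_of_exists_fixing (fullGroupOf Γ)
      (fun _ hf _ => apply_mem_orbitOf hf) (m := n)
      (fun _ ha _ hb hab _ _ => exists_mem_fullGroupOf_apply_eq ha hb hab) le_rfl hx hy hxO hyO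
  · exact exists_mem_forall_apply_eq_of_exists_fixing ⁅fullGroupOf Γ, fullGroupOf Γ⁆
      (fun _ hf _ => apply_mem_orbitOf (Subgroup.commutator_le_self _ hf)) (m := n - 2)
      (fun _ ha _ hb hab _ hS => exists_mem_commutator_fullGroupOf_apply_eq_of_card_lt ht ha hb
        hab (by omega)) le_rfl hx hy hxO hyO
end

section
/- Let X be a compact space, ψ a homeomorphism of X, and A a clopen ψ-omniscient subset. Let ψ_A be the first-return map (ψ_A(x) = ψ^{k(x)}(x), where k(x) is the smallest positive n with ψⁿ(x) ∈ A if x ∈ A, and k(x) = 0 otherwise). Then the homeomorphism ψ⁻¹∘ψ_A is periodic: there exists n ≥ 1 with (ψ⁻¹∘ψ_A)ⁿ = id. -/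
/-!
Since `A` is open and its translates cover the compact space `X`, finitely many of them do, so
every orbit meets `A` within a uniformly bounded number of steps in either direction. Hence every
point lies in a tower `a, ψ a, …, ψ^(r a - 1) a` over some `a ∈ A`, of height `r a` bounded by a
constant `M`. On such a tower `ψ⁻¹ ∘ ψ_A` steps down, and from the base `a` jumps to the top: it
is a cyclic permutation of order `r a`, so its `M!`-th iterate is the identity.
-/

variable {X : Type*} [TopologicalSpace X]

open Function Set

theorem zpow_apply_zpow_apply (ψ : X ≃ₜ X) (m n : ℤ) (x : X) :
    (ψ ^ m) ((ψ ^ n) x) = (ψ ^ (m + n)) x := by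
  rw [zpow_add]
  rfl

theorem exists_abs_sub_le_zpow_mem [CompactSpace X] (ψ : X ≃ₜ X) {A : Set X} (hA : IsOpen A)
    (homni : ⋃ n : ℤ, (ψ ^ n) '' A = univ) :
    ∃ N : ℕ, ∀ (x : X) (k : ℤ), ∃ n : ℤ, |n - k| ≤ N ∧ (ψ ^ n) x ∈ A := by
  obtain ⟨s, hs⟩ := isCompact_univ.elim_finite_subcover (fun n : ℤ => (ψ ^ n) '' A)
    (fun n => (ψ ^ n).isOpenMap A hA) homni.ge
  refine ⟨s.sup Int.natAbs, fun x k => ?_⟩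
  obtain ⟨m, hms, a, ha, hax⟩ := mem_iUnion₂.1 (hs (mem_univ ((ψ ^ k) x)))
  refine ⟨-m + k, ?_, ?_⟩
  · have hm : m.natAbs ≤ s.sup Int.natAbs := Finset.le_sup (f := Int.natAbs) hms
    rw [add_sub_cancel_right, abs_neg, Int.abs_eq_natAbs]
    exact_mod_cast hm
  · rwa [← zpow_apply_zpow_apply, ← hax, zpow_apply_zpow_apply, neg_add_cancel, zpow_zero]

theorem exists_zpow_neg_mem [CompactSpace X] (ψ : X ≃ₜ X) {A : Set X} (hA : IsOpen A)
    (homni : ⋃ n : ℤ, (ψ ^ n) '' A = univ) (x : X) : ∃ j : ℕ, (ψ ^ (-(j : ℤ))) x ∈ A := by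
  obtain ⟨N, hN⟩ := exists_abs_sub_le_zpow_mem ψ hA homni
  obtain ⟨n, hn, hnA⟩ := hN x (-N)
  refine ⟨(-n).toNat, ?_⟩
  rwa [Int.toNat_of_nonneg (by grind), neg_neg]

theorem exists_forall_returnTime_le [CompactSpace X] (ψ : X ≃ₜ X) {A : Set X} (hA : IsOpen A)
    (homni : ⋃ n : ℤ, (ψ ^ n) '' A = univ) {r : X → ℤ}
    (hmin : ∀ a ∈ A, ∀ m : ℤ, 0 < m → m < r a → (ψ ^ m) a ∉ A) :
    ∃ M : ℕ, ∀ a ∈ A, r a ≤ M := by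
  obtain ⟨N, hN⟩ := exists_abs_sub_le_zpow_mem ψ hA homni
  refine ⟨2 * N + 1, fun a ha => ?_⟩
  obtain ⟨n, hn, hnA⟩ := hN a (N + 1)
  have : r a ≤ n := not_lt.1 fun hlt => hmin a ha n (by grind) hlt hnA
  grind

/-- The map `ψ⁻¹ ∘ ψ_A` of the paper, for the return time `r` to `A` (`0` off `A`). -/
def returnShift (ψ : X ≃ₜ X) (r : X → ℤ) (x : X) : X :=
  (ψ ^ (r x - 1)) x

section returnShift

variable {ψ : X ≃ₜ X} {A : Set X} {r : X → ℤ}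

theorem iterate_returnShift_of_forall_not_mem (hr0 : ∀ x ∉ A, r x = 0) {x : X} {i : ℕ}
    (hx : ∀ k : ℕ, k < i → (ψ ^ (-(k : ℤ))) x ∉ A) :
    (returnShift ψ r)^[i] x = (ψ ^ (-(i : ℤ))) x := by
  induction i with
  | zero => simp
  | succ i ih =>
    rw [iterate_succ_apply', ih fun k hk => hx k (by omega), returnShift,
      hr0 _ (hx i (by omega)), zpow_apply_zpow_apply]
    congr 2
    push_cast
    ring

theorem isPeriodicPt_returnShift_zpow (hr0 : ∀ x ∉ A, r x = 0) {a : X} {h j : ℕ}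
    (hh : (h : ℤ) = r a) (hmin : ∀ m : ℤ, 0 < m → m < r a → (ψ ^ m) a ∉ A) (hj : j < h) :
    IsPeriodicPt (returnShift ψ r) h ((ψ ^ (j : ℤ)) a) := by
  have descend_to_base : (returnShift ψ r)^[j] ((ψ ^ (j : ℤ)) a) = a := by
    rw [iterate_returnShift_of_forall_not_mem hr0, zpow_apply_zpow_apply, neg_add_cancel,
      zpow_zero]
    · rfl
    intro k hk
    rw [zpow_apply_zpow_apply]
    exact hmin _ (by omega) (by omega)
  have descend_from_top :
      (returnShift ψ r)^[h - 1 - j] ((ψ ^ (r a - 1)) a) = (ψ ^ (j : ℤ)) a := by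
    rw [iterate_returnShift_of_forall_not_mem hr0, zpow_apply_zpow_apply]
    · congr 2
      omega
    intro k hk
    rw [zpow_apply_zpow_apply]
    exact hmin _ (by omega) (by omega)
  have hsplit : h = (h - 1 - j) + 1 + j := by omega
  rw [IsPeriodicPt, IsFixedPt, hsplit, iterate_add_apply, iterate_add_apply, descend_to_base,
    iterate_one, returnShift, descend_from_top]

theorem exists_eq_zpow_of_lt_returnTime (hback : ∀ x, ∃ j : ℕ, (ψ ^ (-(j : ℤ))) x ∈ A)
    (hret : ∀ a ∈ A, 0 < r a ∧ (ψ ^ r a) a ∈ A) (x : X) :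
    ∃ a ∈ A, ∃ j : ℕ, (j : ℤ) < r a ∧ (ψ ^ (j : ℤ)) a = x := by
  classical
  set j := Nat.find (hback x)
  have hjA : (ψ ^ (-(j : ℤ))) x ∈ A := Nat.find_spec (hback x)
  refine ⟨_, hjA, j, ?_, by rw [zpow_apply_zpow_apply, add_neg_cancel, zpow_zero]; rfl⟩
  by_contra! hle
  -- otherwise `ψ ^ r a` maps the base `a` to `ψ ^ (-(j - r a)) x ∈ A`, against minimality of `j`
  obtain ⟨hpos, hretA⟩ := hret _ hjA
  refine Nat.find_min (hback x) (m := j - (r ((ψ ^ (-(j : ℤ))) x)).toNat) (by omega) ?_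
  rw [zpow_apply_zpow_apply] at hretA
  convert hretA using 3
  omega

end returnShift

theorem Function.IsPeriodicPt.trans_factorial {α : Type*} {f : α → α} {x : α} {n M : ℕ}
    (hx : IsPeriodicPt f n x) (hn : 0 < n) (hnM : n ≤ M) : IsPeriodicPt f M.factorial x :=
  hx.trans_dvd (Nat.dvd_factorial hn hnM)

/-- for `A` a clopen `ψ`-omniscient set and `ψ_A` the first-return map
(given by the return time `r`), the map `ψ⁻¹ ∘ ψ_A : x ↦ ψ^(r x - 1) x` is periodic. -/
theorem statement5 [CompactSpace X] (ψ : X ≃ₜ X) (A : Set X) (hA : IsClopen A)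
    (homni : (⋃ n : ℤ, (ψ ^ n) '' A) = Set.univ) (r : X → ℤ)
    (hr0 : ∀ x ∉ A, r x = 0)
    (hrpos : ∀ x ∈ A, 0 < r x ∧ (ψ ^ r x) x ∈ A ∧
      ∀ m : ℤ, 0 < m → m < r x → (ψ ^ m) x ∉ A) :
    ∃ n : ℕ, 1 ≤ n ∧ ∀ x : X, (fun y => (ψ ^ (r y - 1)) y)^[n] x = x := by
  obtain ⟨M, hM⟩ :=
    exists_forall_returnTime_le ψ hA.isOpen homni fun a ha => (hrpos a ha).2.2
  refine ⟨M.factorial, M.factorial_pos, fun x => ?_⟩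
  obtain ⟨a, ha, j, hj, rfl⟩ := exists_eq_zpow_of_lt_returnTime
    (exists_zpow_neg_mem ψ hA.isOpen homni) (fun a ha => ⟨(hrpos a ha).1, (hrpos a ha).2.1⟩) x
  obtain ⟨h, hh⟩ : ∃ h : ℕ, (h : ℤ) = r a := ⟨(r a).toNat, by omega⟩
  exact (isPeriodicPt_returnShift_zpow hr0 hh (hrpos a ha).2.2 (by omega)).trans_factorial
    (by omega) (by have := hM a ha; omega)
end

section
/- Let f be a homeomorphism of a compact totally separated space X and n ≥ 1 an integer such that f^i is fixed-point-free for all 1 ≤ i ≤ n−1. Then there exists a clopen set U such that the sets f^i(U) for 0 ≤ i ≤ n−1 are pairwise disjoint and ⋃_{i∈ℤ} f^i(U) = X. In particular, if fⁿ = id and f generates a free action of ℤ/nℤ, the sets f^i(U), 0 ≤ i ≤ n−1, partition X. -/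
/-!
Call `U` a tower base of height `n` if `U, f U, …, f^(n-1) U` are pairwise disjoint. If `f^d`
moves `x` for `0 < d < n`, total separatedness gives a clopen tower base around `x`, and by
compactness finitely many of them cover `X`. These are merged one at a time: given a clopen tower
base `U`, let `T` be the clopen union of the `f^d U` with `|d| < n`; then `U ∪ (V \ T)` is again a
tower base, and its orbit contains both `U` and `V`.
-/

variable {X : Type*} [TopologicalSpace X]

open Set

lemma Homeomorph.image_mul (g h : X ≃ₜ X) (s : Set X) : (g * h) '' s = g '' (h '' s) :=
  (image_image g h s).symm

def IsTowerBase (f : X ≃ₜ X) (n : ℕ) (U : Set X) : Prop :=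
  ∀ d : ℕ, 0 < d → d < n → Disjoint U ((f ^ d) '' U)

section TowerBase

variable {f : X ≃ₜ X} {n : ℕ} {U V T : Set X}

lemma IsTowerBase.mono (hU : IsTowerBase f n U) (hVU : V ⊆ U) : IsTowerBase f n V :=
  fun d hd hdn => (hU d hd hdn).mono hVU (image_mono hVU)

lemma IsTowerBase.disjoint_pow_image (hU : IsTowerBase f n U) {i j : ℕ} (hi : i < n)
    (hj : j < n) (hij : i ≠ j) : Disjoint ((f ^ i) '' U) ((f ^ j) '' U) := by
  wlog hlt : i < j generalizing i j
  · exact (this hj hi hij.symm (by omega)).symm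
  obtain ⟨d, rfl⟩ := Nat.exists_eq_add_of_lt hlt
  rw [add_assoc, pow_add, Homeomorph.image_mul, disjoint_image_iff (f ^ i).injective]
  exact hU (d + 1) d.succ_pos (by omega)

lemma IsTowerBase.union_diff (hU : IsTowerBase f n U) (hV : IsTowerBase f n V)
    (hT : ∀ d : ℤ, |d| < n → (f ^ d) '' U ⊆ T) : IsTowerBase f n (U ∪ (V \ T)) := by
  intro d hd hdn
  have hpos : (f ^ d) '' U ⊆ T := by simpa using hT d (by rw [abs_of_nonneg] <;> omega)
  have hneg : (f ^ (-d : ℤ)) '' U ⊆ T := hT (-d) (by rw [abs_neg, abs_of_nonneg] <;> omega)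
  rw [image_union, disjoint_union_left, disjoint_union_right, disjoint_union_right]
  refine ⟨⟨hU d hd hdn, ?_⟩, ?_, (hV d hd hdn).mono sdiff_subset (image_mono sdiff_subset)⟩
  · rw [disjoint_left]
    rintro _ hyU ⟨v, ⟨-, hvT⟩, rfl⟩
    refine hvT (hneg ⟨(f ^ d) v, hyU, ?_⟩)
    rw [zpow_neg, zpow_natCast]
    exact (f ^ d).symm_apply_apply v
  · exact disjoint_left.2 fun y hy hyU => hy.2 (hpos hyU)

lemma IsTowerBase.existsUnique_mem_pow_image (hU : IsTowerBase f n U) (hn : 0 < n)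
    (hfn : f ^ n = 1) (hcov : ⋃ k : ℤ, (f ^ k) '' U = univ) (x : X) :
    ∃! i : Fin n, x ∈ (f ^ (i : ℕ)) '' U := by
  obtain ⟨k, hk⟩ := mem_iUnion.1 (hcov ▸ mem_univ x)
  have h0 : 0 ≤ k % n := Int.emod_nonneg k (by omega)
  have hlt : k % n < n := Int.emod_lt_of_pos k (by omega)
  set i : Fin n := ⟨(k % n).toNat, by omega⟩
  have hi : x ∈ (f ^ (i : ℕ)) '' U := by
    rwa [← zpow_natCast, Int.toNat_of_nonneg h0, ← zpow_eq_zpow_emod' k hfn]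
  refine ⟨i, hi, fun j hj => Fin.ext ?_⟩
  by_contra hji
  exact disjoint_left.1 (hU.disjoint_pow_image j.2 i.2 hji) hj hi

end TowerBase

lemma exists_isClopen_mem_disjoint_image [TotallySeparatedSpace X] {g : X ≃ₜ X} {x : X}
    (hx : g x ≠ x) : ∃ V, IsClopen V ∧ x ∈ V ∧ Disjoint V (g '' V) := by
  obtain ⟨A, hA, hxA, hgxA⟩ := exists_isClopen_of_totally_separated hx.symm
  refine ⟨A ∩ g ⁻¹' Aᶜ, hA.inter (hA.compl.preimage g.continuous), ⟨hxA, hgxA⟩, ?_⟩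
  rw [disjoint_left]
  rintro _ ⟨hyA, -⟩ ⟨z, ⟨-, hzA⟩, rfl⟩
  exact hzA hyA

lemma exists_isClopen_isTowerBase_mem [TotallySeparatedSpace X] {f : X ≃ₜ X} {n : ℕ} {x : X}
    (hx : ∀ d : ℕ, 0 < d → d < n → (f ^ d) x ≠ x) :
    ∃ V, IsClopen V ∧ IsTowerBase f n V ∧ x ∈ V := by
  have hW : ∀ d ∈ Finset.Ioo 0 n, ∃ W, IsClopen W ∧ x ∈ W ∧ Disjoint W ((f ^ d) '' W) :=
    fun d hd => exists_isClopen_mem_disjoint_image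
      (hx d (Finset.mem_Ioo.1 hd).1 (Finset.mem_Ioo.1 hd).2)
  choose! W hWc hxW hWd using hW
  refine ⟨⋂ d ∈ Finset.Ioo 0 n, W d, isClopen_biInter_finset hWc, fun d hd hdn => ?_,
    mem_iInter₂.2 hxW⟩
  have hd' : d ∈ Finset.Ioo 0 n := Finset.mem_Ioo.2 ⟨hd, hdn⟩
  exact (hWd d hd').mono (biInter_subset_of_mem hd') (image_mono (biInter_subset_of_mem hd'))

lemma exists_isClopen_isTowerBase_biUnion_subset {ι : Type*} {f : X ≃ₜ X} {n : ℕ}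
    {V : ι → Set X} (hVc : ∀ i, IsClopen (V i)) (hV : ∀ i, IsTowerBase f n (V i))
    (s : Finset ι) :
    ∃ U, IsClopen U ∧ IsTowerBase f n U ∧ ⋃ i ∈ s, V i ⊆ ⋃ k : ℤ, (f ^ k) '' U := by
  classical
  induction s using Finset.induction_on with
  | empty => exact ⟨∅, isClopen_empty, fun d _ _ => by simp, by simp⟩
  | insert i s _ ih =>
    obtain ⟨U, hUc, hU, hcov⟩ := ih
    set T := ⋃ d ∈ Finset.Ioo (-n : ℤ) n, (f ^ d) '' U
    set U' := U ∪ (V i \ T)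
    have hTc : IsClopen T := isClopen_biUnion_finset fun d _ =>
      ⟨(f ^ d).isClosedMap _ hUc.1, (f ^ d).isOpenMap _ hUc.2⟩
    have horbit : ⋃ k : ℤ, (f ^ k) '' U ⊆ ⋃ k : ℤ, (f ^ k) '' U' :=
      iUnion_mono fun k => image_mono subset_union_left
    have hT : T ⊆ ⋃ k : ℤ, (f ^ k) '' U' :=
      (iUnion₂_subset fun d _ => subset_iUnion (fun k : ℤ => (f ^ k) '' U) d).trans horbit
    refine ⟨U', hUc.union ((hVc i).diff hTc), hU.union_diff (hV i) fun d hd => ?_, ?_⟩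
    · exact Finset.subset_set_biUnion_of_mem (f := fun d : ℤ => (f ^ d) '' U)
        (Finset.mem_Ioo.2 (abs_lt.1 hd))
    rw [Finset.set_biUnion_insert]
    refine union_subset (fun y hy => ?_) (hcov.trans horbit)
    by_cases hyT : y ∈ T
    · exact hT hyT
    · exact mem_iUnion.2 ⟨0, by simp [U', hy, hyT]⟩

/-- if `f^i` is fixed-point-free for `1 ≤ i ≤ n-1` on a compact totally
separated space, there is a clopen `U` with `f^i(U)`, `0 ≤ i ≤ n-1`, pairwise disjoint
and `⋃_{i∈ℤ} f^i(U) = X`; if moreover `fⁿ = 1`, these sets partition `X`. -/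
theorem statement6 [CompactSpace X] [TotallySeparatedSpace X] (f : X ≃ₜ X)
    (n : ℕ) (hn : 1 ≤ n)
    (hfree : ∀ i : ℕ, 1 ≤ i → i ≤ n - 1 → ∀ x : X, (f ^ i) x ≠ x) :
    ∃ U : Set X, IsClopen U ∧
      (∀ i j : ℕ, i < n → j < n → i ≠ j → Disjoint ((f ^ i) '' U) ((f ^ j) '' U)) ∧
      (⋃ k : ℤ, (f ^ k) '' U) = Set.univ ∧
      ((f ^ n = 1) → ∀ x : X, ∃! i : Fin n, x ∈ (f ^ (i : ℕ)) '' U) := by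
  have hbase (x : X) : ∃ V, IsClopen V ∧ IsTowerBase f n V ∧ x ∈ V :=
    exists_isClopen_isTowerBase_mem fun d hd hdn => hfree d hd (by omega) x
  choose V hVc hV hxV using hbase
  obtain ⟨t, ht⟩ := isCompact_univ.elim_finite_subcover V (fun x => (hVc x).isOpen)
    fun x _ => mem_iUnion.2 ⟨x, hxV x⟩
  obtain ⟨U, hUc, hU, hcov⟩ := exists_isClopen_isTowerBase_biUnion_subset hVc hV t
  have huniv : ⋃ k : ℤ, (f ^ k) '' U = univ := eq_univ_of_univ_subset (ht.trans hcov)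
  exact ⟨U, hUc, fun i j hi hj hij => hU.disjoint_pow_image hi hj hij, huniv,
    fun hfn => hU.existsUnique_mem_pow_image hn hfn huniv⟩
end

section
/- Any subshift (X, φ) over ℤ with no orbit of cardinality ≤ d is isomorphic (ℤ-equivariantly homeomorphic) to a d-proper subshift over some finite alphabet, i.e., one where for all w in the subshift and all m, n with 0 < |m−n| ≤ d, one has w(m) ≠ w(n). -/
/-!
No point of the subshift has a period `k ∈ [1, d]`, since its orbit would then have at most `k`
points. By compactness a single window `[-N, N]` witnesses this for all points and all such `k`
at once, so the `(2N+1)`-block code `w ↦ (n ↦ w|[n-N, n+N])` takes distinct values at any two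
positions at distance at most `d`. Being continuous, injective and shift-commuting on a compact
space, the block code is a conjugacy onto its image.
-/

open Function

section Subshift

variable {α β : Type*}

def IsShiftInvariant (S : Set (ℤ → α)) : Prop :=
  ∀ w ∈ S, (fun n => w (n - 1)) ∈ S ∧ (fun n => w (n + 1)) ∈ S

theorem IsShiftInvariant.translate_mem {S : Set (ℤ → α)} (hS : IsShiftInvariant S) (t : ℤ) :
    ∀ w ∈ S, (fun n => w (n + t)) ∈ S := by
  induction t using Int.induction_on with
  | zero => simp
  | succ k ih =>
    intro w hw
    convert (hS _ (ih w hw)).2 using 3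
    ring
  | pred k ih =>
    intro w hw
    convert (hS _ (ih w hw)).1 using 3
    ring

theorem IsShiftInvariant.image {S : Set (ℤ → α)} (hS : IsShiftInvariant S)
    {Ψ : (ℤ → α) → ℤ → β} (hΨ : ∀ w t, Ψ (fun n => w (n + t)) = fun n => Ψ w (n + t)) :
    IsShiftInvariant (Ψ '' S) := by
  rintro _ ⟨w, hw, rfl⟩
  exact ⟨⟨_, hS.translate_mem (-1) w hw, by simpa [sub_eq_add_neg] using hΨ w (-1)⟩,
    ⟨_, hS.translate_mem 1 w hw, hΨ w 1⟩⟩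

theorem exists_finset_orbit_subset_of_periodic {w : ℤ → α} {k : ℤ} (hw : Periodic w k)
    (hk : 0 < k) :
    ∃ t : Finset (ℤ → α), (Set.range fun j : ℤ => fun n => w (n - j)) ⊆ t ∧ t.card ≤ k.toNat := by
  classical
  refine ⟨(Finset.Ico 0 k).image fun j n => w (n - j), ?_, ?_⟩
  · rintro _ ⟨j, rfl⟩
    refine Finset.mem_image.2 ⟨j % k, Finset.mem_Ico.2 ⟨Int.emod_nonneg j hk.ne',
      Int.emod_lt_of_pos j hk⟩, funext fun n => ?_⟩
    have hj : n - j = n - j % k - (j / k) * k := by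
      linarith [Int.emod_add_mul_ediv j k, mul_comm k (j / k)]
    show w (n - j % k) = w (n - j)
    rw [hj, ← smul_eq_mul, hw.sub_zsmul_eq]
  · simpa using Finset.card_image_le (s := Finset.Ico 0 k) (f := fun j n => w (n - j))

theorem exists_ne_add_of_lt_card_orbit {w : ℤ → α} {d : ℕ}
    (horb : ∀ t : Finset (ℤ → α), (Set.range fun j : ℤ => fun n => w (n - j)) ⊆ t → d < t.card)
    {k : ℤ} (hk : k ∈ Finset.Icc 1 (d : ℤ)) : ∃ i, w i ≠ w (i + k) := by
  rw [Finset.mem_Icc] at hk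
  by_contra! hper
  obtain ⟨t, hsub, hcard⟩ :=
    exists_finset_orbit_subset_of_periodic (fun i => (hper i).symm) (by omega)
  have := horb t hsub
  omega

section Window

variable [TopologicalSpace α] [T2Space α] {S : Set (ℤ → α)}

theorem IsCompact.exists_window (hS : IsCompact S) (k : ℤ) (h : ∀ w ∈ S, ∃ i, w i ≠ w (i + k)) :
    ∃ N : ℕ, ∀ w ∈ S, ∃ i : ℤ, |i| ≤ N ∧ w i ≠ w (i + k) := by
  let U : ℕ → Set (ℤ → α) := fun N => {w | ∃ i : ℤ, |i| ≤ N ∧ w i ≠ w (i + k)}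
  have hUo : ∀ N, IsOpen (U N) := fun N => by
    simp only [U, Set.ofPred_exists, Set.ofPred_and]
    exact isOpen_iUnion fun i =>
      isOpen_const.inter (isOpen_ne_fun (continuous_apply i) (continuous_apply (i + k)))
  have hcover : S ⊆ ⋃ N, U N := fun w hw => by
    obtain ⟨i, hi⟩ := h w hw
    exact Set.mem_iUnion.2 ⟨i.natAbs, i, Int.abs_eq_natAbs i ▸ le_rfl, hi⟩
  have hmono : Monotone U := fun M N hMN w ⟨i, hi, hne⟩ =>
    ⟨i, hi.trans (by exact_mod_cast hMN), hne⟩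
  exact hS.elim_directed_cover U hUo hcover hmono.directed_le

theorem IsCompact.exists_uniform_window (hS : IsCompact S) (K : Finset ℤ)
    (h : ∀ w ∈ S, ∀ k ∈ K, ∃ i, w i ≠ w (i + k)) :
    ∃ N : ℕ, ∀ w ∈ S, ∀ k ∈ K, ∃ i : ℤ, |i| ≤ N ∧ w i ≠ w (i + k) := by
  choose! N hN using fun k (hk : k ∈ K) => hS.exists_window k fun w hw => h w hw k hk
  refine ⟨K.sup N, fun w hw k hk => ?_⟩
  obtain ⟨i, hi, hne⟩ := hN k hk w hw
  exact ⟨i, hi.trans (by exact_mod_cast Finset.le_sup hk), hne⟩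

end Window

def blockCode (N : ℕ) (w : ℤ → α) (n : ℤ) : Fin (2 * N + 1) → α :=
  fun j => w (n + j - N)

theorem blockCode_translate (N : ℕ) (w : ℤ → α) (t n : ℤ) :
    blockCode N (fun m => w (m + t)) n = blockCode N w (n + t) := by
  funext j
  simp only [blockCode]
  ring_nf

theorem blockCode_center (N : ℕ) (w : ℤ → α) (n : ℤ) :
    blockCode N w n ⟨N, by omega⟩ = w n := by
  simp [blockCode]

theorem blockCode_ne {N : ℕ} {w : ℤ → α} {p q i : ℤ} (hi : |i| ≤ N)
    (hne : w (i + p) ≠ w (i + q)) : blockCode N w p ≠ blockCode N w q := by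
  obtain ⟨hi₁, hi₂⟩ := abs_le.1 hi
  intro heq
  have := congrFun heq ⟨(i + N).toNat, by omega⟩
  simp only [blockCode] at this
  exact hne (by convert this using 2 <;> omega)

theorem blockCode_ne_of_window {S : Set (ℤ → α)} (hS : IsShiftInvariant S) {d N : ℕ}
    (hN : ∀ w ∈ S, ∀ k ∈ Finset.Icc 1 (d : ℤ), ∃ i : ℤ, |i| ≤ N ∧ w i ≠ w (i + k))
    {w : ℤ → α} (hw : w ∈ S) {p q : ℤ} (hpq : p ≠ q) (hd : |p - q| ≤ d) :
    blockCode N w p ≠ blockCode N w q := by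
  wlog h : p < q generalizing p q
  · exact (this hpq.symm (abs_sub_comm p q ▸ hd) (by omega)).symm
  obtain ⟨i, hi, hne⟩ := hN _ (hS.translate_mem p w hw) (q - p)
    (Finset.mem_Icc.2 ⟨by omega, by rw [abs_sub_comm, abs_of_pos (sub_pos.2 h)] at hd; exact hd⟩)
  exact blockCode_ne hi (by convert hne using 2; ring)

theorem continuous_blockCode [TopologicalSpace α] (N : ℕ) (n : ℤ) :
    Continuous fun w : ℤ → α => blockCode N w n :=
  continuous_pi fun _ => continuous_apply _

noncomputable def homeomorphImage [TopologicalSpace α] [TopologicalSpace β] [T2Space β]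
    {S : Set α} (hS : IsCompact S) {Ψ : α → β} (hΨ : Continuous Ψ) (hinj : Injective Ψ) :
    S ≃ₜ Ψ '' S :=
  haveI := isCompact_iff_compactSpace.1 hS
  Continuous.homeoOfEquivCompactToT2 (f := Equiv.Set.image Ψ S hinj)
    (continuous_induced_rng.2 (hΨ.comp continuous_subtype_val))

theorem homeomorphImage_apply [TopologicalSpace α] [TopologicalSpace β] [T2Space β]
    {S : Set α} (hS : IsCompact S) {Ψ : α → β} (hΨ : Continuous Ψ) (hinj : Injective Ψ)
    (w : S) : (homeomorphImage hS hΨ hinj w : β) = Ψ w :=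
  rfl

end Subshift

/-- a subshift over `ℤ` with no orbit of cardinality `≤ d` is
`ℤ`-equivariantly homeomorphic to a `d`-proper subshift over some finite alphabet. -/
theorem statement10 {A : Type*} [Fintype A] [TopologicalSpace A] [DiscreteTopology A]
    (d : ℕ) (S : Set (ℤ → A)) (hcl : IsClosed S)
    (hinv : ∀ w ∈ S, (fun n => w (n - 1)) ∈ S ∧ (fun n => w (n + 1)) ∈ S)
    (horb : ∀ w ∈ S, ∀ t : Finset (ℤ → A),
      (Set.range fun k : ℤ => fun n => w (n - k)) ⊆ ↑t → d < t.card) :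
    ∃ (m : ℕ) (T : Set (ℤ → Fin m)), IsClosed T ∧
      (∀ v ∈ T, (fun n => v (n - 1)) ∈ T ∧ (fun n => v (n + 1)) ∈ T) ∧
      (∀ v ∈ T, ∀ p q : ℤ, p ≠ q → |p - q| ≤ (d : ℤ) → v p ≠ v q) ∧
      ∃ h : S ≃ₜ T, ∀ w₁ w₂ : S, (∀ n : ℤ, (w₂ : ℤ → A) n = (w₁ : ℤ → A) (n - 1)) →
        ∀ n : ℤ, (h w₂ : ℤ → Fin m) n = (h w₁ : ℤ → Fin m) (n - 1) := by
  have hS : IsCompact S := hcl.isCompact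
  obtain ⟨N, hN⟩ := hS.exists_uniform_window (Finset.Icc 1 (d : ℤ)) fun w hw _ =>
    exists_ne_add_of_lt_card_orbit (horb w hw)
  let e := Fintype.equivFin (Fin (2 * N + 1) → A)
  let Ψ : (ℤ → A) → ℤ → Fin (Fintype.card (Fin (2 * N + 1) → A)) :=
    fun w n => e (blockCode N w n)
  have hΨ : Continuous Ψ := continuous_pi fun n =>
    continuous_of_discreteTopology.comp (continuous_blockCode N n)
  have hinj : Injective Ψ := fun w u h => funext fun n => by
    simpa [blockCode_center] using congrFun (e.injective (congrFun h n)) ⟨N, by omega⟩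
  have htrans : ∀ w t, Ψ (fun n => w (n + t)) = fun n => Ψ w (n + t) := fun w t =>
    funext fun n => by simp only [Ψ, blockCode_translate]
  refine ⟨_, Ψ '' S, (hS.image hΨ).isClosed, IsShiftInvariant.image hinv htrans, ?_,
    homeomorphImage hS hΨ hinj, fun w₁ w₂ h₁₂ n => ?_⟩
  · rintro _ ⟨w, hw, rfl⟩ p q hpq hd
    exact e.injective.ne (blockCode_ne_of_window hinv hN hw hpq hd)
  · rw [homeomorphImage_apply, homeomorphImage_apply, funext h₁₂]
    simpa only [sub_eq_add_neg] using congrFun (htrans w₁ (-1)) n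
end

section
/- Let X be a nonempty subshift of finite type over ℤ that is irreducible. Then X is the intersection of a decreasing sequence of irreducible subshifts of finite type, each defined by forbidding all forbidden patterns of X of a fixed length n. -/
/-!
A point lies in `X_n` exactly when all its windows of length `n` are allowed in `X`. Hence
`X ⊆ X_n`, the `X_n` decrease, and a point lying in every `X_n` contains no forbidden word of `X`
(a forbidden word of length `k` would sit in an allowed window of length `k + 1`); the
finitely many words of length `n` suffice to define `X_n`.

For irreducibility of `X_n`, let `w₁` occur in `x₁ ∈ X_n` and `w₂` in `x₂ ∈ X_n`. The `n - 1`
symbols of `x₁` just before the end of `w₁` and the first `n - 1` symbols of the occurrence of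
`w₂` in `x₂` are allowed in `X`, so irreducibility of `X` joins them by an allowed word `v`.
Splicing `x₁`, `v` and a shift of `x₂` gives a point whose every `n`-window lies inside `x₁`,
inside `v`, or inside the shifted `x₂`, hence a point of `X_n` containing `w₁ ⋯ w₂`.
-/

/-- The word `w` of length `k` occurs in `x` at position `p`. -/
def PatOccurs {A : Type*} (x : ℤ → A) (w : ℕ → A) (k : ℕ) (p : ℤ) : Prop :=
  ∀ i : ℕ, i < k → x (p + i) = w i

/-- The word `w` of length `k` is an allowed pattern of `X`. -/
def PatAllowed {A : Type*} (X : Set (ℤ → A)) (w : ℕ → A) (k : ℕ) : Prop :=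
  ∃ x ∈ X, ∃ p : ℤ, PatOccurs x w k p

/-- `X` is an irreducible subshift: any two allowed patterns can be seen as initial and
terminal segments of a single allowed pattern. -/
def SubshiftIrreducible {A : Type*} (X : Set (ℤ → A)) : Prop :=
  ∀ (k₁ : ℕ) (w₁ : ℕ → A) (k₂ : ℕ) (w₂ : ℕ → A),
    PatAllowed X w₁ k₁ → PatAllowed X w₂ k₂ →
    ∃ (m : ℕ) (u : ℕ → A), PatAllowed X u (k₁ + m + k₂) ∧
      (∀ i : ℕ, i < k₁ → u i = w₁ i) ∧ (∀ i : ℕ, i < k₂ → u (k₁ + m + i) = w₂ i)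

/-- `X` is defined by the set of forbidden words `F` (words with their lengths). -/
def DefinedByForbidden {A : Type*} (X : Set (ℤ → A)) (F : Set ((ℕ → A) × ℕ)) : Prop :=
  X = {x | ∀ w : (ℕ → A) × ℕ, w ∈ F → ∀ p : ℤ, ¬ PatOccurs x w.1 w.2 p}

/-- `X` is a subshift of finite type. -/
def IsSFT {A : Type*} (X : Set (ℤ → A)) : Prop :=
  ∃ F : Set ((ℕ → A) × ℕ), F.Finite ∧ DefinedByForbidden X F

section

variable {A : Type*} {X : Set (ℤ → A)} {n : ℕ}

theorem PatAllowed.congr {w w' : ℕ → A} {k : ℕ} (hw : PatAllowed X w k)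
    (h : ∀ i < k, w i = w' i) : PatAllowed X w' k := by
  obtain ⟨x, hx, p, ho⟩ := hw
  exact ⟨x, hx, p, fun i hi => (ho i hi).trans (h i hi)⟩

theorem PatAllowed.subword {w : ℕ → A} {k j l : ℕ} (hw : PatAllowed X w k) (hjl : j + l ≤ k) :
    PatAllowed X (fun i => w (j + i)) l := by
  obtain ⟨x, hx, p, ho⟩ := hw
  refine ⟨x, hx, p + j, fun i hi => ?_⟩
  change _ = w (j + i)
  rw [← ho (j + i) (by omega), Nat.cast_add, add_assoc]

/-- The subshift `X_n` of the statement. -/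
def markovApprox (X : Set (ℤ → A)) (n : ℕ) : Set (ℤ → A) :=
  {x | ∀ w : ℕ → A, ¬ PatAllowed X w n → ∀ p : ℤ, ¬ PatOccurs x w n p}

theorem mem_markovApprox_iff {x : ℤ → A} :
    x ∈ markovApprox X n ↔ ∀ p : ℤ, PatAllowed X (fun i => x (p + i)) n :=
  ⟨fun hx p => by_contra fun h => hx _ h p fun _ _ => rfl,
    fun hx _ hw p hp => hw ((hx p).congr hp)⟩

theorem subset_markovApprox : X ⊆ markovApprox X n :=
  fun x hx _ hw p hp => hw ⟨x, hx, p, hp⟩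

theorem patAllowed_window_of_mem_markovApprox {x : ℤ → A} {l : ℕ}
    (hx : x ∈ markovApprox X n) (p : ℤ) (hl : l ≤ n) :
    PatAllowed X (fun i => x (p + i)) l := by
  simpa using (mem_markovApprox_iff.1 hx p).subword (j := 0) (by omega : 0 + l ≤ n)

theorem markovApprox_antitone : Antitone (markovApprox X) := fun _ _ hmn _ hx =>
  mem_markovApprox_iff.2 fun p => patAllowed_window_of_mem_markovApprox hx p hmn

theorem comp_add_mem_markovApprox {x : ℤ → A} (hx : x ∈ markovApprox X n) (d : ℤ) :
    (fun t => x (t + d)) ∈ markovApprox X n :=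
  mem_markovApprox_iff.2 fun p =>
    (mem_markovApprox_iff.1 hx (p + d)).congr fun i _ => by simp only [add_right_comm]

/-- `hr` and `hL` make every window of length `n` fit inside one of the three pieces. -/
theorem mem_markovApprox_of_splice {x₁ x₂ z : ℤ → A} {v : ℕ → A} {r J M : ℤ} {L : ℕ}
    (h₁ : x₁ ∈ markovApprox X n) (h₂ : x₂ ∈ markovApprox X n) (hv : PatAllowed X v L)
    (hz₁ : ∀ t < J, z t = x₁ t) (hz₂ : ∀ t, M ≤ t → z t = x₂ t)
    (hzv : ∀ t, r ≤ t → t < r + L → z t = v (t - r).toNat)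
    (hr : r + n ≤ J + 1) (hL : M + n ≤ r + L + 1) : z ∈ markovApprox X n := by
  refine mem_markovApprox_iff.2 fun s => ?_
  rcases (by omega : s + n ≤ J ∨ M ≤ s ∨ (r ≤ s ∧ s + n ≤ r + L)) with hs | hs | ⟨hs, hs'⟩
  · exact (mem_markovApprox_iff.1 h₁ s).congr fun i _ => (hz₁ _ (by omega)).symm
  · exact (mem_markovApprox_iff.1 h₂ s).congr fun i _ => (hz₂ _ (by omega)).symm
  · refine (hv.subword (j := (s - r).toNat) (l := n) (by omega)).congr fun i _ => ?_
    rw [hzv _ (by omega) (by omega)]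
    congr 1
    omega

theorem subshiftIrreducible_markovApprox (hirr : SubshiftIrreducible X) (n : ℕ) :
    SubshiftIrreducible (markovApprox X n) := by
  rintro k₁ w₁ k₂ w₂ ⟨x₁, hx₁, p₁, ho₁⟩ ⟨x₂, hx₂, p₂, ho₂⟩
  set J : ℤ := p₁ + k₁
  set r : ℤ := J - (n - 1 : ℕ)
  obtain ⟨m, v, hv, hv₁, hv₂⟩ := hirr (n - 1) (fun i => x₁ (r + i)) (n - 1)
    (fun i => x₂ (p₂ + i)) (patAllowed_window_of_mem_markovApprox hx₁ r (by omega))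
    (patAllowed_window_of_mem_markovApprox hx₂ p₂ (by omega))
  set M : ℤ := J + m
  let z : ℤ → A := fun t => if t < J then x₁ t else if t < M then v (t - r).toNat
    else x₂ (t + (p₂ - M))
  have hz₁ : ∀ t < J, z t = x₁ t := fun t ht => if_pos ht
  have hz₂ : ∀ t, M ≤ t → z t = x₂ (t + (p₂ - M)) := fun t ht => by
    simp only [z, if_neg (show ¬t < J by omega), if_neg (show ¬t < M by omega)]
  have hzv : ∀ t, r ≤ t → t < r + (n - 1 + m + (n - 1) : ℕ) → z t = v (t - r).toNat := by
    intro t ht ht'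
    by_cases htJ : t < J
    · rw [hz₁ t htJ, hv₁ _ (by omega)]
      congr 1
      omega
    by_cases htM : t < M
    · simp only [z, if_neg htJ, if_pos htM]
    · rw [hz₂ t (by omega), show (t - r).toNat = n - 1 + m + (t - M).toNat by omega,
        hv₂ _ (by omega)]
      congr 1
      omega
  have hz : z ∈ markovApprox X n :=
    mem_markovApprox_of_splice hx₁ (comp_add_mem_markovApprox hx₂ (p₂ - M)) hv hz₁ hz₂ hzv
      (by omega) (by omega)
  refine ⟨m, fun i => z (p₁ + i), ⟨z, hz, p₁, fun _ _ => rfl⟩, fun i hi => ?_, fun i hi => ?_⟩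
  · change z (p₁ + i) = w₁ i
    rw [hz₁ _ (by omega), ho₁ i hi]
  · change z (p₁ + (k₁ + m + i : ℕ)) = w₂ i
    rw [hz₂ _ (by omega), ← ho₂ i hi]
    congr 1
    omega

theorem isSFT_markovApprox [Finite A] (hn : 1 ≤ n) : IsSFT (markovApprox X n) := by
  -- forbidden words are normalised to be constant from position `n - 1` on
  let trunc : (ℕ → A) → ℕ → A := fun w i => w (min i (n - 1))
  have trunc_eq : ∀ w, ∀ i < n, trunc w i = w i := fun w i hi => by
    simp only [trunc, min_eq_left (show i ≤ n - 1 by omega)]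
  refine ⟨{q | q.2 = n ∧ ¬ PatAllowed X q.1 n ∧ trunc q.1 = q.1}, ?_, ?_⟩
  · refine Set.Finite.of_finite_image (f := fun q i => q.1 (i : Fin n)) (Set.toFinite _) ?_
    rintro ⟨w, k⟩ ⟨hk, -, hw⟩ ⟨w', k'⟩ ⟨hk', -, hw'⟩ heq
    refine Prod.ext (funext fun i => ?_) (hk.trans hk'.symm)
    rw [← hw, ← hw']
    exact congrFun heq ⟨min i (n - 1), by omega⟩
  · ext x
    refine ⟨fun hx ⟨w, k⟩ ⟨hk, hw, _⟩ p => hk ▸ hx w hw p, fun hx w hw p hp => ?_⟩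
    refine hx (trunc w, n) ⟨rfl, fun h => hw (h.congr (trunc_eq w)), ?_⟩ p
      fun i hi => (hp i hi).trans (trunc_eq w i hi).symm
    funext i
    simp only [trunc, min_assoc, min_self]

theorem iInter_markovApprox {F : Set ((ℕ → A) × ℕ)} (hX : DefinedByForbidden X F) :
    ⋂ n ∈ {n : ℕ | 1 ≤ n}, markovApprox X n = X := by
  refine subset_antisymm (fun x hx => ?_) (Set.subset_iInter₂ fun _ _ => subset_markovApprox)
  rw [hX]
  rintro ⟨w, k⟩ hw p hp
  obtain ⟨y, hy, q, hq⟩ := patAllowed_window_of_mem_markovApprox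
    (Set.mem_iInter₂.1 hx (k + 1) (Nat.le_add_left 1 k)) p (Nat.le_succ k)
  rw [hX] at hy
  exact hy (w, k) hw q fun i hi => (hq i hi).trans (hp i hi)

end

theorem statement11_general {A : Type*} [Fintype A] (X : Set (ℤ → A))
    (hsft : IsSFT X) (hirr : SubshiftIrreducible X) :
    (∀ n : ℕ, 1 ≤ n →
      IsSFT {x : ℤ → A | ∀ w : ℕ → A, ¬ PatAllowed X w n → ∀ p : ℤ, ¬ PatOccurs x w n p} ∧
      SubshiftIrreducible
        {x : ℤ → A | ∀ w : ℕ → A, ¬ PatAllowed X w n → ∀ p : ℤ, ¬ PatOccurs x w n p}) ∧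
    (∀ m n : ℕ, 1 ≤ m → m ≤ n →
      {x : ℤ → A | ∀ w : ℕ → A, ¬ PatAllowed X w n → ∀ p : ℤ, ¬ PatOccurs x w n p} ⊆
      {x : ℤ → A | ∀ w : ℕ → A, ¬ PatAllowed X w m → ∀ p : ℤ, ¬ PatOccurs x w m p}) ∧
    (⋂ n ∈ {n : ℕ | 1 ≤ n},
      {x : ℤ → A | ∀ w : ℕ → A, ¬ PatAllowed X w n → ∀ p : ℤ, ¬ PatOccurs x w n p}) = X := by
  obtain ⟨F, -, hF⟩ := hsft
  exact ⟨fun n hn => ⟨isSFT_markovApprox hn, subshiftIrreducible_markovApprox hirr n⟩,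
    fun _ _ _ hmn => markovApprox_antitone hmn, iInter_markovApprox hF⟩

/-- a nonempty irreducible SFT `X` over `ℤ` is the intersection of the
decreasing sequence of irreducible SFTs `X_n`, where `X_n` is defined by forbidding all
forbidden patterns of `X` of length `n`. -/
theorem statement11 {A : Type*} [Fintype A] (X : Set (ℤ → A)) (hne : X.Nonempty)
    (hsft : IsSFT X) (hirr : SubshiftIrreducible X) :
    (∀ n : ℕ, 1 ≤ n →
      IsSFT {x : ℤ → A | ∀ w : ℕ → A, ¬ PatAllowed X w n → ∀ p : ℤ, ¬ PatOccurs x w n p} ∧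
      SubshiftIrreducible
        {x : ℤ → A | ∀ w : ℕ → A, ¬ PatAllowed X w n → ∀ p : ℤ, ¬ PatOccurs x w n p}) ∧
    (∀ m n : ℕ, 1 ≤ m → m ≤ n →
      {x : ℤ → A | ∀ w : ℕ → A, ¬ PatAllowed X w n → ∀ p : ℤ, ¬ PatOccurs x w n p} ⊆
      {x : ℤ → A | ∀ w : ℕ → A, ¬ PatAllowed X w m → ∀ p : ℤ, ¬ PatOccurs x w m p}) ∧
    (⋂ n ∈ {n : ℕ | 1 ≤ n},
      {x : ℤ → A | ∀ w : ℕ → A, ¬ PatAllowed X w n → ∀ p : ℤ, ¬ PatOccurs x w n p}) = X :=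
  statement11_general X hsft hirr
end

section
/- Let σ be a permutation of ℤ with bounded displacement (sup_n |σ(n) − n| < ∞). Then for any set M ⊂ ℤ with σ(M) △ M finite, the map assigning to σ the integer |σ(M) \ M| − |M \ σ(M)| defines a group homomorphism from the group of bounded-displacement permutations stabilizing M up to finite sets to ℤ. -/
/-
The index `|X \ Y| - |Y \ X|` of two sets with finite symmetric difference equals
`|X ∩ S| - |Y ∩ S|` for any finite `S` containing that symmetric difference, so it is additive:
`ind(X, Z) = ind(X, Y) + ind(Y, Z)`. It is also invariant under applying a bijection to both
sets. Since `(στ)(M) = σ(τ(M))`, this gives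
`ind(στM, M) = ind(στM, σM) + ind(σM, M) = ind(τM, M) + ind(σM, M)`.
-/

/-- The "transfer" index of a permutation `σ` relative to a set `M`. -/
noncomputable def transferIdx (M : Set ℤ) (σ : Equiv.Perm ℤ) : ℤ :=
  (((σ : ℤ → ℤ) '' M \ M).ncard : ℤ) - ((M \ (σ : ℤ → ℤ) '' M).ncard : ℤ)

namespace Set

variable {α β : Type*}

/-- Only meaningful when `symmDiff X Y` is finite: `ncard` of an infinite set is `0`. -/
noncomputable def relIndex (X Y : Set α) : ℤ := ((X \ Y).ncard : ℤ) - ((Y \ X).ncard : ℤ)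

theorem relIndex_of_finite {X Y : Set α} (hX : X.Finite) (hY : Y.Finite) :
    relIndex X Y = (X.ncard : ℤ) - (Y.ncard : ℤ) := by
  have hXY := ncard_sdiff_add_ncard X Y hX hY
  have hYX := ncard_sdiff_add_ncard Y X hY hX
  rw [union_comm] at hYX
  unfold relIndex
  omega

theorem relIndex_inter_of_symmDiff_subset {X Y S : Set α} (h : symmDiff X Y ⊆ S) :
    relIndex X Y = relIndex (X ∩ S) (Y ∩ S) := by
  have key : ∀ {A B : Set α}, A \ B ⊆ S → A \ B = (A ∩ S) \ (B ∩ S) := fun hAB => by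
    rw [← inter_sdiff_distrib_right, inter_eq_left.2 hAB]
  rw [symmDiff_def, sup_le_iff] at h
  rw [relIndex, relIndex, ← key h.1, ← key h.2]

theorem relIndex_of_symmDiff_subset {X Y S : Set α} (hS : S.Finite) (h : symmDiff X Y ⊆ S) :
    relIndex X Y = ((X ∩ S).ncard : ℤ) - ((Y ∩ S).ncard : ℤ) := by
  rw [relIndex_inter_of_symmDiff_subset h,
    relIndex_of_finite (hS.subset inter_subset_right) (hS.subset inter_subset_right)]

theorem relIndex_add_relIndex {X Y Z : Set α} (hXY : (symmDiff X Y).Finite)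
    (hYZ : (symmDiff Y Z).Finite) : relIndex X Y + relIndex Y Z = relIndex X Z := by
  set S := symmDiff X Y ∪ symmDiff Y Z
  have hS : S.Finite := hXY.union hYZ
  rw [relIndex_of_symmDiff_subset hS subset_union_left,
    relIndex_of_symmDiff_subset hS subset_union_right,
    relIndex_of_symmDiff_subset hS (symmDiff_triangle X Y Z)]
  ring

theorem relIndex_image {f : α → β} (hf : Function.Injective f) (X Y : Set α) :
    relIndex (f '' X) (f '' Y) = relIndex X Y := by
  rw [relIndex, relIndex, ← image_sdiff hf, ← image_sdiff hf, ncard_image_of_injective _ hf,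
    ncard_image_of_injective _ hf]

end Set

open Set

theorem statement13_general (M : Set ℤ) (σ τ : Equiv.Perm ℤ)
    (hσM : (symmDiff ((σ : ℤ → ℤ) '' M) M).Finite)
    (hτM : (symmDiff ((τ : ℤ → ℤ) '' M) M).Finite) :
    transferIdx M (σ * τ) = transferIdx M σ + transferIdx M τ := by
  have hστM : (symmDiff (σ '' (τ '' M)) (σ '' M)).Finite := by
    rw [← image_symmDiff σ.injective]
    exact hτM.image σ
  change relIndex ((σ * τ : Equiv.Perm ℤ) '' M) M = relIndex (σ '' M) M + relIndex (τ '' M) M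
  rw [Equiv.Perm.coe_mul, image_comp, ← relIndex_add_relIndex hστM hσM,
    relIndex_image σ.injective, add_comm]

/-- on the group of bounded-displacement permutations of `ℤ` stabilizing
`M` up to finite sets, `σ ↦ |σ(M) \ M| − |M \ σ(M)|` is a group homomorphism to `ℤ`. -/
theorem statement13 (M : Set ℤ) (σ τ : Equiv.Perm ℤ)
    (hσd : ∃ C : ℤ, ∀ n : ℤ, |σ n - n| ≤ C) (hτd : ∃ C : ℤ, ∀ n : ℤ, |τ n - n| ≤ C)
    (hσM : (symmDiff ((σ : ℤ → ℤ) '' M) M).Finite)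
    (hτM : (symmDiff ((τ : ℤ → ℤ) '' M) M).Finite) :
    transferIdx M (σ * τ) = transferIdx M σ + transferIdx M τ :=
  statement13_general M σ τ hσM hτM
end

section
/- Let A be an alphabet with q ≥ 3 letters and let X_pro ⊂ A^ℤ be the subshift of bi-infinite sequences with no two consecutive equal letters. Then the topological full group ⟦X_pro⟧ contains a nonabelian free subgroup; more precisely, the involutions σ_i (i ∈ A) defined by σ_i(w) = shift^{κ_i(w)}(w), with κ_i(w) = 1 if w(0) = a_i, κ_i(w) = −1 if w(1) = a_i, and 0 otherwise, generate a free product of q copies of ℤ/2ℤ. -/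
variable {X : Type*} [TopologicalSpace X]

@[simp] lemma homeo_one_apply (x : X) : (1 : X ≃ₜ X) x = x := rfl

/-- The topological full group of a homeomorphism `φ`. -/
def fullGroupZ (φ : X ≃ₜ X) : Subgroup (X ≃ₜ X) where
  carrier := {ψ | ∃ κ : X → ℤ, IsLocallyConstant κ ∧ ∀ x, ψ x = (φ ^ κ x) x}
  one_mem' := ⟨0, IsLocallyConstant.const 0, fun x => by simp⟩
  mul_mem' := by
    rintro ψ₁ ψ₂ ⟨κ₁, h₁, e₁⟩ ⟨κ₂, h₂, e₂⟩
    refine ⟨fun x => κ₁ (ψ₂ x) + κ₂ x, (h₁.comp_continuous ψ₂.continuous).add h₂, fun x => ?_⟩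
    rw [zpow_add]
    simp only [homeo_mul_apply]
    rw [← e₂, ← e₁]
  inv_mem' := by
    rintro ψ ⟨κ, h, e⟩
    refine ⟨fun x => -κ (ψ.symm x), (h.comp_continuous ψ.symm.continuous).neg, fun x => ?_⟩
    have := e (ψ.symm x)
    conv_lhs => rw [show ψ⁻¹ x = ψ.symm x from rfl]
    have h2 : (φ ^ (-κ (ψ.symm x))) (ψ (ψ.symm x)) = ψ.symm x := by
      rw [this, ← homeo_mul_apply, ← zpow_add]
      simp
    rw [ψ.apply_symm_apply] at h2
    exact h2.symm

/-- The subshift of proper bi-infinite words: no two consecutive equal letters. -/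
def Xpro (A : Type*) : Set (ℤ → A) := {w | ∀ n : ℤ, w n ≠ w (n + 1)}

/-- The shift homeomorphism on the proper subshift. -/
def shiftPro (A : Type*) [TopologicalSpace A] : ↥(Xpro A) ≃ₜ ↥(Xpro A) where
  toFun w := ⟨fun n => (w : ℤ → A) (n - 1), fun n => by simpa using w.2 (n - 1)⟩
  invFun w := ⟨fun n => (w : ℤ → A) (n + 1), fun n => w.2 (n + 1)⟩
  left_inv w := by ext n; simp
  right_inv w := by ext n; simp
  continuous_toFun := by
    apply Continuous.subtype_mk
    exact continuous_pi fun n => (continuous_apply (n - 1)).comp continuous_subtype_val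
  continuous_invFun := by
    apply Continuous.subtype_mk
    exact continuous_pi fun n => (continuous_apply (n + 1)).comp continuous_subtype_val


/-!
Each `σ_i` is `x ↦ shift^{κ_i x} x` for a locally constant cocycle `κ_i` with
`κ_i (σ_i x) = -κ_i x`, hence an involution in the full group. If `l` is a nonempty word with no
two consecutive equal letters and `w` reads `l` on the window `[1 - |l|, 0]`, then every factor of
`σ_{l_1} ⋯ σ_{l_n}` finds its own letter at position `0` and shifts, so the product moves `w` to
`shift^{|l|} w`. Taking `w` periodic of period `|l| + 1` (possible because `q ≥ 3`) makes this
differ from `w`, so the `σ_i` satisfy no relations besides `σ_i² = 1`. In the resulting free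
product, `σ_a σ_b` and `σ_a σ_c` are free: a reduced word in them expands, after cancelling the
squares `σ_a σ_a`, to a nonempty word in the `σ_i` with no two consecutive equal letters.
-/

open Function

section InvolutionFamily

variable {G ι κ : Type*} [Group G]

def zmodTwoHom (g : G) (hg : g * g = 1) : Multiplicative (ZMod 2) →* G where
  toFun x := if x = 1 then 1 else g
  map_one' := if_pos rfl
  map_mul' x y := by
    have h : ∀ x y : Multiplicative (ZMod 2), x ≠ 1 → y ≠ 1 → x * y = 1 := by decide
    by_cases hx : x = 1 <;> by_cases hy : y = 1 <;> simp [hx, hy, h x y, hg]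

lemma zmodTwoHom_of_ne_one {g : G} {hg : g * g = 1} {x : Multiplicative (ZMod 2)} (hx : x ≠ 1) :
    zmodTwoHom g hg x = g :=
  if_neg hx

variable [DecidableEq ι] {s : ι → G}

theorem Monoid.CoprodI.lift_zmodTwoHom_injective (hsq : ∀ i, s i * s i = 1)
    (hs : ∀ l : List ι, l ≠ [] → l.IsChain (· ≠ ·) → (l.map s).prod ≠ 1) :
    Injective (lift fun i => zmodTwoHom (s i) (hsq i)) := by
  rw [injective_iff_map_eq_one]
  intro g hg
  obtain ⟨w, rfl⟩ := Word.equiv.symm.surjective g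
  change lift _ w.prod = 1 at hg
  change w.prod = 1
  have hprod : lift (fun i => zmodTwoHom (s i) (hsq i)) w.prod =
      ((w.toList.map Sigma.fst).map s).prod := by
    rw [Word.prod, map_list_prod, List.map_map, List.map_map]
    refine congrArg List.prod (List.map_congr_left fun p hp => ?_)
    simp [lift_of, zmodTwoHom_of_ne_one (w.ne_one p hp)]
  by_contra hw
  refine hs _ ?_ ((List.isChain_map _).2 w.chain_ne) (hprod ▸ hg)
  intro hnil
  rw [List.map_eq_nil_iff] at hnil
  exact hw (by simp [Word.prod, hnil])

def consOrCancel (i : ι) (l : List ι) : List ι :=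
  if l.head? = some i then l.tail else i :: l

lemma consOrCancel_cons_self (i : ι) (l : List ι) : consOrCancel i (i :: l) = l :=
  if_pos rfl

lemma consOrCancel_of_head?_ne {i : ι} {l : List ι} (h : l.head? ≠ some i) :
    consOrCancel i l = i :: l :=
  if_neg h

lemma prod_map_consOrCancel (hsq : ∀ i, s i * s i = 1) (i : ι) (l : List ι) :
    ((consOrCancel i l).map s).prod = s i * (l.map s).prod := by
  by_cases h : l.head? = some i
  · obtain ⟨t, rfl⟩ : ∃ t, l = i :: t := by
      cases l <;> simp_all
    simp [consOrCancel_cons_self, ← mul_assoc, hsq]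
  · simp [consOrCancel_of_head?_ne h]

lemma isChain_consOrCancel (i : ι) {l : List ι} (hl : l.IsChain (· ≠ ·)) :
    (consOrCancel i l).IsChain (· ≠ ·) := by
  by_cases h : l.head? = some i
  · simpa [consOrCancel, h] using hl.tail
  · rw [consOrCancel_of_head?_ne h]
    exact hl.cons fun y hy => by rintro rfl; exact h hy

/-- The word in the `s i` obtained from a word in `x_j = s a * s (y j)`, with the squares
`s i * s i` cancelled on the fly. -/
def expandWord (a : ι) (y : κ → ι) : List (κ × Bool) → List ι
  | [] => []
  | (j, true) :: L => consOrCancel a (consOrCancel (y j) (expandWord a y L))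
  | (j, false) :: L => consOrCancel (y j) (consOrCancel a (expandWord a y L))

variable {a : ι} {y : κ → ι}

lemma prod_map_expandWord (hsq : ∀ i, s i * s i = 1) (L : List (κ × Bool)) :
    ((expandWord a y L).map s).prod =
      FreeGroup.lift (fun j => s a * s (y j)) (FreeGroup.mk L) := by
  have hinv : ∀ i, (s i)⁻¹ = s i := fun i => inv_eq_of_mul_eq_one_right (hsq i)
  induction L with
  | nil => simp [expandWord]
  | cons p L ih =>
    rcases p with ⟨j, _ | _⟩ <;>
      simp_all [expandWord, prod_map_consOrCancel hsq, FreeGroup.lift_mk, mul_assoc]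

lemma isChain_expandWord (L : List (κ × Bool)) : (expandWord a y L).IsChain (· ≠ ·) := by
  induction L with
  | nil => exact List.isChain_nil
  | cons p L ih =>
    rcases p with ⟨j, _ | _⟩ <;>
      exact isChain_consOrCancel _ (isChain_consOrCancel _ ih)

lemma expandWord_cons_of_isReduced (hy : Injective y) (ha : ∀ j, y j ≠ a) (p : κ × Bool)
    (L : List (κ × Bool)) (hL : FreeGroup.IsReduced (p :: L)) :
    ∃ rest, expandWord a y (p :: L) = cond p.2 [a, y p.1] [y p.1] ++ rest := by
  induction L generalizing p with
  | nil =>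
    rcases p with ⟨j, _ | _⟩ <;>
      simp [expandWord, consOrCancel, ha j, (ha j).symm]
  | cons q L ih =>
    obtain ⟨hpq, hqL⟩ := List.isChain_cons_cons.1 hL
    obtain ⟨rest, hrest⟩ := ih q hqL
    -- Reducedness excludes `x_j⁻¹ x_j` and `x_j x_j⁻¹`, so where the blocks of `p` and `q` meet
    -- at most the square `s a * s a` cancels.
    rcases p with ⟨j, _ | _⟩ <;> rcases q with ⟨k, _ | _⟩ <;>
      simp only [expandWord.eq_2 a y j, expandWord.eq_3 a y j] <;> rw [hrest] <;>
      clear ih hrest hqL hL <;>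
      simp_all [consOrCancel, hy.eq_iff, eq_comm (a := k), eq_comm (a := a)]

theorem FreeGroup.lift_mul_injective_of_involutions (hsq : ∀ i, s i * s i = 1)
    (hs : ∀ l : List ι, l ≠ [] → l.IsChain (· ≠ ·) → (l.map s).prod ≠ 1)
    (hy : Injective y) (ha : ∀ j, y j ≠ a) :
    Injective (FreeGroup.lift fun j => s a * s (y j)) := by
  classical
  rw [injective_iff_map_eq_one]
  intro g hg
  by_contra hg1
  obtain ⟨p, L, hpL⟩ := List.exists_cons_of_ne_nil (mt FreeGroup.toWord_eq_nil_iff.1 hg1)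
  obtain ⟨rest, hrest⟩ :=
    expandWord_cons_of_isReduced hy ha p L (hpL ▸ FreeGroup.isReduced_toWord)
  refine hs (expandWord a y (p :: L)) ?_ (isChain_expandWord _) ?_
  · rcases p with ⟨j, _ | _⟩ <;> simp [hrest]
  · rw [prod_map_expandWord hsq, ← hpL, FreeGroup.mk_toWord, hg]

end InvolutionFamily

section FullGroup

variable (φ : X ≃ₜ X) {κ : X → ℤ}

lemma continuous_zpow_apply_of_isLocallyConstant (hκ : IsLocallyConstant κ) :
    Continuous fun x => (φ ^ κ x) x := by
  refine continuous_iff_continuousAt.2 fun x => (φ ^ κ x).continuous.continuousAt.congr ?_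
  filter_upwards [hκ.eventually_eq x] with x' hx'
  rw [hx']

variable {φ}

lemma involutive_zpow_apply (hinv : ∀ x, κ ((φ ^ κ x) x) = -κ x) :
    Involutive fun x => (φ ^ κ x) x := by
  intro x
  simp only [hinv, ← homeo_mul_apply, ← zpow_add, neg_add_cancel, zpow_zero, homeo_one_apply]

def cocycleInvolution (hκ : IsLocallyConstant κ) (hinv : ∀ x, κ ((φ ^ κ x) x) = -κ x) :
    X ≃ₜ X where
  toFun x := (φ ^ κ x) x
  invFun x := (φ ^ κ x) x
  left_inv := involutive_zpow_apply hinv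
  right_inv := involutive_zpow_apply hinv
  continuous_toFun := continuous_zpow_apply_of_isLocallyConstant φ hκ
  continuous_invFun := continuous_zpow_apply_of_isLocallyConstant φ hκ

variable (hκ : IsLocallyConstant κ) (hinv : ∀ x, κ ((φ ^ κ x) x) = -κ x)

lemma cocycleInvolution_apply (x : X) : cocycleInvolution hκ hinv x = (φ ^ κ x) x :=
  rfl

lemma cocycleInvolution_mem_fullGroupZ : cocycleInvolution hκ hinv ∈ fullGroupZ φ :=
  ⟨κ, hκ, fun _ => rfl⟩

lemma cocycleInvolution_mul_self : cocycleInvolution hκ hinv * cocycleInvolution hκ hinv = 1 :=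
  Homeomorph.ext (involutive_zpow_apply hinv)

end FullGroup

namespace Xpro

variable {A : Type*}

/-- The `l.length`-periodic word reading `l` on `[0, l.length)`; the default `d` only matters
for `l = []`. -/
def periodicWord (l : List A) (d : A) (m : ℤ) : A :=
  l.getD (m % l.length).toNat d

lemma periodicWord_natCast {l : List A} {d : A} {k : ℕ} (hk : k < l.length) :
    periodicWord l d k = l[k] := by
  rw [periodicWord, Int.emod_eq_of_lt (by omega) (by omega), Int.toNat_natCast,
    List.getD_eq_getElem]

lemma periodicWord_mem {l : List A} (d : A) (hne : l ≠ []) (hl : l.IsChain (· ≠ ·))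
    (hcyc : l.getLast hne ≠ l.head hne) : periodicWord l d ∈ Xpro A := by
  intro m
  have hN : 0 < (l.length : ℤ) := by simpa [List.length_pos_iff] using hne
  obtain ⟨r, hrN, hmr⟩ : ∃ r : ℕ, r < l.length ∧ m % l.length = r :=
    ⟨(m % l.length).toNat, by have := Int.emod_lt_of_pos m hN; omega,
      (Int.toNat_of_nonneg (Int.emod_nonneg m hN.ne')).symm⟩
  have hm1 : (m + 1) % l.length = ((r + 1 : ℕ) : ℤ) % l.length := by
    rw [← Int.emod_add_emod, hmr]; push_cast; rfl
  simp only [periodicWord, hmr, hm1, Int.toNat_natCast, List.getD_eq_getElem _ _ hrN]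
  rcases Nat.lt_or_ge (r + 1) l.length with hr | hr
  · rw [Int.emod_eq_of_lt (by omega) (by omega), Int.toNat_natCast,
      List.getD_eq_getElem _ _ hr]
    exact List.isChain_iff_getElem.1 hl r hr
  · have hrl : r + 1 = l.length := by omega
    rw [hrl, Int.emod_self, Int.toNat_zero, List.getD_eq_getElem _ _ (by omega)]
    simpa [List.getLast_eq_getElem, List.head_eq_getElem, ← hrl] using hcyc

variable [TopologicalSpace A]

lemma shiftPro_zpow_apply (k : ℤ) (w : Xpro A) (n : ℤ) :
    ((shiftPro A ^ k) w : ℤ → A) n = (w : ℤ → A) (n - k) := by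
  induction k using Int.induction_on generalizing w n with
  | zero => simp
  | succ k ih =>
    rw [zpow_add_one, homeo_mul_apply, ih]
    exact congrArg (w : ℤ → A) (by ring)
  | pred k ih =>
    rw [zpow_sub_one, homeo_mul_apply, ih]
    exact congrArg (w : ℤ → A) (by ring)

variable [DecidableEq A]

def kappa (i : A) (w : Xpro A) : ℤ :=
  if (w : ℤ → A) 0 = i then 1 else if (w : ℤ → A) 1 = i then -1 else 0

lemma kappa_zpow_kappa (i : A) (w : Xpro A) :
    kappa i ((shiftPro A ^ kappa i w) w) = -kappa i w := by
  have hw := w.2 (-1)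
  simp only [kappa, shiftPro_zpow_apply]
  split_ifs <;> simp_all

variable [DiscreteTopology A]

lemma isLocallyConstant_kappa (i : A) : IsLocallyConstant (kappa i) :=
  ((IsLocallyConstant.iff_continuous fun w : Xpro A => ((w : ℤ → A) 0, (w : ℤ → A) 1)).2
    (((continuous_apply 0).comp continuous_subtype_val).prodMk
      ((continuous_apply 1).comp continuous_subtype_val))).comp
    fun p => if p.1 = i then 1 else if p.2 = i then -1 else 0

def sigma (i : A) : Xpro A ≃ₜ Xpro A :=
  cocycleInvolution (isLocallyConstant_kappa i) (kappa_zpow_kappa i)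

lemma sigma_apply_coe (i : A) (w : Xpro A) (n : ℤ) :
    (sigma i w : ℤ → A) n =
      if (w : ℤ → A) 0 = i then (w : ℤ → A) (n - 1)
      else if (w : ℤ → A) 1 = i then (w : ℤ → A) (n + 1)
      else (w : ℤ → A) n := by
  rw [sigma, cocycleInvolution_apply, shiftPro_zpow_apply, kappa]
  split_ifs <;> simp

lemma prod_map_sigma_apply (l : List A) (w : Xpro A)
    (hw : ∀ k (hk : k < l.length), (w : ℤ → A) (k + 1 - l.length) = l[k]) :
    (l.map sigma).prod w = (shiftPro A ^ (l.length : ℤ)) w := by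
  induction l with
  | nil => simp
  | cons i l ih =>
    have hl := ih fun k hk => by
      have := hw (k + 1) (by simpa)
      rw [List.getElem_cons_succ] at this
      simpa using this
    have hi : kappa i ((shiftPro A ^ (l.length : ℤ)) w) = 1 := by
      have := hw 0 (by simp)
      rw [List.getElem_cons_zero] at this
      exact if_pos (by rw [shiftPro_zpow_apply, zero_sub]; simpa using this)
    rw [List.map_cons, List.prod_cons, homeo_mul_apply, hl, sigma, cocycleInvolution_apply, hi,
      ← homeo_mul_apply, ← zpow_add, List.length_cons, Nat.cast_succ, add_comm]

lemma prod_map_sigma_ne_one [Fintype A] (hq : 3 ≤ Fintype.card A) {l : List A} (hne : l ≠ [])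
    (hl : l.IsChain (· ≠ ·)) : (l.map sigma).prod ≠ 1 := by
  obtain ⟨z, hzl, hzh⟩ := ENat.exists_ne_ne_of_three_le
    (by rw [ENat.card_eq_coe_fintype_card]; exact_mod_cast hq) (l.getLast hne) (l.head hne)
  set n := l.length
  have hl' : (l ++ [z]).IsChain (· ≠ ·) :=
    List.isChain_append.2
      ⟨hl, List.isChain_singleton z, by simp [List.getLast?_eq_some_getLast hne, hzl.symm]⟩
  let c : Xpro A := ⟨periodicWord (l ++ [z]) z,
    periodicWord_mem z (by simp) hl' (by simpa [List.head_append_of_ne_nil hne] using hzh)⟩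
  have hc : ∀ k (hk : k < n + 1), (c : ℤ → A) k = (l ++ [z])[k]'(by simpa using hk) :=
    fun k hk => periodicWord_natCast _
  let W := (shiftPro A ^ (1 - n : ℤ)) c
  have hW : ∀ m, (W : ℤ → A) m = (c : ℤ → A) (m + n - 1) := fun m => by
    simp only [W, shiftPro_zpow_apply]; ring_nf
  intro h1
  have hfix := prod_map_sigma_apply l W fun k hk => by
    rw [hW, show (k : ℤ) + 1 - n + n - 1 = k by ring, hc k (by omega), List.getElem_append_left]
  rw [h1] at hfix
  have := congrArg (fun v : Xpro A => (v : ℤ → A) 1) hfix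
  simp only [homeo_one_apply, shiftPro_zpow_apply, hW] at this
  rw [show (1 : ℤ) + n - 1 = (n : ℕ) by ring, show 1 - (n : ℤ) + n - 1 = (0 : ℕ) by simp,
    hc n (by omega), hc 0 (by omega)] at this
  rw [List.getElem_concat_length rfl, List.getElem_append_left (List.length_pos_iff.2 hne)]
    at this
  exact hzh (this.trans (List.head_eq_getElem hne).symm)

end Xpro

/-- van Douwen: for an alphabet with `q ≥ 3` letters, the topological
full group of the proper subshift contains involutions `σ_i` (with the explicit cocycle
`κ_i`) generating a free product of `q` copies of `ℤ/2ℤ`; in particular it contains a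
nonabelian free subgroup. -/
theorem statement16 (A : Type*) [Fintype A] [DecidableEq A] [TopologicalSpace A]
    [DiscreteTopology A] (hq : 3 ≤ Fintype.card A) :
    ∃ σ : A → (↥(Xpro A) ≃ₜ ↥(Xpro A)),
      (∀ i, σ i ∈ fullGroupZ (shiftPro A)) ∧
      (∀ (i : A) (w : ↥(Xpro A)) (n : ℤ),
        ((σ i w : ℤ → A) n) =
          if (w : ℤ → A) 0 = i then (w : ℤ → A) (n - 1)
          else if (w : ℤ → A) 1 = i then (w : ℤ → A) (n + 1)
          else (w : ℤ → A) n) ∧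
      (∀ i, σ i * σ i = 1) ∧
      (∃ Φ : Monoid.CoprodI (fun _ : A => Multiplicative (ZMod 2)) →*
          (↥(Xpro A) ≃ₜ ↥(Xpro A)),
        Function.Injective Φ ∧
        ∀ i : A, Φ (Monoid.CoprodI.of (i := i) (Multiplicative.ofAdd 1)) = σ i) ∧
      (∃ ι : FreeGroup (Fin 2) →* (↥(Xpro A) ≃ₜ ↥(Xpro A)),
        Function.Injective ι ∧ ∀ u, ι u ∈ fullGroupZ (shiftPro A)) := by
  have hmem i : Xpro.sigma i ∈ fullGroupZ (shiftPro A) := cocycleInvolution_mem_fullGroupZ _ _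
  have hsq i : Xpro.sigma (A := A) i * Xpro.sigma i = 1 := cocycleInvolution_mul_self _ _
  have hfree l := Xpro.prod_map_sigma_ne_one (A := A) hq (l := l)
  obtain ⟨a, b, c, hab, hac, hbc⟩ := Fintype.two_lt_card_iff.1 hq
  refine ⟨Xpro.sigma, hmem, Xpro.sigma_apply_coe, hsq,
    ⟨_, Monoid.CoprodI.lift_zmodTwoHom_injective hsq hfree, fun i => ?_⟩,
    ⟨_, FreeGroup.lift_mul_injective_of_involutions hsq hfree (a := a) (y := ![b, c]) ?_ ?_,
      fun u => ?_⟩⟩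
  · rw [Monoid.CoprodI.lift_of]
    exact zmodTwoHom_of_ne_one (by decide)
  · intro j k
    fin_cases j <;> fin_cases k <;> simp [hbc, hbc.symm]
  · intro j
    fin_cases j <;> simp [hab.symm, hac.symm]
  · induction u using FreeGroup.induction_on with
    | C1 => exact one_mem _
    | of j => simpa using mul_mem (hmem a) (hmem _)
    | inv_of j ih => simpa using inv_mem ih
    | mul u v hu hv => simpa using mul_mem hu hv
end

section
/- Define, for n ≥ 1 and j ∈ ℤ, angles θ_{nj} = (π/4)·min(√(|j|/n), 1), and unit vectors h_{nj} = √2·(cos θ_{nj}, sin θ_{nj}) in ℝ² viewed as L²({0,1}) with uniform measure. For any permutation g of ℤ with c = sup_j ||g(j)| − |j|| < ∞, the product ∏_{j∈ℤ} cos(θ_{nj} − θ_{n,g(j)}) tends to 1 as n → ∞. -/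
/-!
The angle `θ_{nj}` is `(π/4)·√(|j|/n)` capped at `π/4`. Since `g` moves `|j|` by at most `c`,
the factor of index `j` is `1` as soon as `|j| > n + c`, and otherwise
`(θ_{nj} - θ_{n,g(j)})² ≤ (π/4)² c² / (n · max(1, |j|))` because `√` has slope about
`1/√|j|` near `|j|`. With `cos x ≥ 1 - x²/2` and `∏ (1 - aᵢ) ≥ 1 - ∑ aᵢ` the product is
squeezed between `1 - O(c² (1 + log (n + c)) / n)` and `1`, the logarithm coming from the
harmonic sum `∑_{|j| ≤ n + c} 1 / max(1, |j|)`.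
-/

open Real Filter Topology Finset

theorem Finset.one_sub_sum_le_prod_one_sub {ι : Type*} (s : Finset ι) {a : ι → ℝ}
    (h0 : ∀ i ∈ s, 0 ≤ a i) (h1 : ∀ i ∈ s, a i ≤ 1) :
    1 - ∑ i ∈ s, a i ≤ ∏ i ∈ s, (1 - a i) := by
  induction s using Finset.cons_induction with
  | empty => simp
  | cons i s hi ih =>
    simp only [forall_mem_cons] at h0 h1
    rw [prod_cons, sum_cons]
    have hsum : 0 ≤ ∑ i ∈ s, a i := sum_nonneg h0.2
    have hprod : 0 ≤ ∏ i ∈ s, (1 - a i) := prod_nonneg fun j hj => sub_nonneg.2 (h1.2 j hj)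
    nlinarith [ih h0.2 h1.2]

theorem one_sub_sum_sq_div_two_le_prod_cos {ι : Type*} (s : Finset ι) {x : ι → ℝ}
    (hx : ∀ i ∈ s, x i ^ 2 ≤ 2) :
    1 - ∑ i ∈ s, x i ^ 2 / 2 ≤ ∏ i ∈ s, cos (x i) :=
  calc 1 - ∑ i ∈ s, x i ^ 2 / 2 ≤ ∏ i ∈ s, (1 - x i ^ 2 / 2) :=
        s.one_sub_sum_le_prod_one_sub (fun i _ => by positivity)
          (fun i hi => by linarith [hx i hi])
    _ ≤ ∏ i ∈ s, cos (x i) :=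
        prod_le_prod (fun i hi => by linarith [hx i hi]) fun i _ => one_sub_sq_div_two_le_cos

theorem prod_cos_le_one {ι : Type*} (s : Finset ι) {x : ι → ℝ}
    (hx : ∀ i ∈ s, |x i| ≤ π / 2) : ∏ i ∈ s, cos (x i) ≤ 1 :=
  prod_le_one (fun i hi => cos_nonneg_of_mem_Icc (abs_le.1 (hx i hi)))
    fun _ _ => cos_le_one _

theorem sq_sqrt_sub_sqrt_mul_max_one_le (a b : ℕ) :
    (√a - √b) ^ 2 * max 1 (a : ℝ) ≤ ((a : ℝ) - b) ^ 2 := by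
  rcases Nat.eq_zero_or_pos a with rfl | ha
  · have hb : (b : ℝ) ≤ (b : ℝ) ^ 2 := by
      rcases Nat.eq_zero_or_pos b with rfl | hb
      · simp
      · nlinarith [(Nat.one_le_cast (α := ℝ)).2 hb]
    simpa [sq_sqrt (Nat.cast_nonneg b)] using hb
  · have ha' : (1 : ℝ) ≤ a := Nat.one_le_cast.2 ha
    have hsa := sq_sqrt (Nat.cast_nonneg (α := ℝ) a)
    have hsb := sq_sqrt (Nat.cast_nonneg (α := ℝ) b)
    rw [max_eq_right ha']
    calc (√a - √b) ^ 2 * a = (√a - √b) ^ 2 * √a ^ 2 := by rw [hsa]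
      _ ≤ (√a - √b) ^ 2 * (√a + √b) ^ 2 := by
          gcongr
          exact le_add_of_nonneg_right (sqrt_nonneg _)
      _ = (√a ^ 2 - √b ^ 2) ^ 2 := by ring
      _ = ((a : ℝ) - b) ^ 2 := by rw [hsa, hsb]

theorem sum_Icc_natAbs_le_two_mul_sum_range {f : ℕ → ℝ} (hf : ∀ k, 0 ≤ f k) (M : ℕ) :
    ∑ j ∈ Icc (-(M : ℤ)) M, f j.natAbs ≤ 2 * ∑ k ∈ range (M + 1), f k := by
  set r := range (M + 1)
  set P := r.image (Nat.cast : ℕ → ℤ)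
  set N := r.image (fun k : ℕ => -(k : ℤ))
  have hsub : Icc (-(M : ℤ)) M ⊆ P ∪ N := by
    intro j hj
    simp only [mem_Icc] at hj
    simp only [P, N, r, mem_union, mem_image, mem_range]
    rcases Int.natAbs_eq j with h | h
    · exact Or.inl ⟨j.natAbs, by omega, h.symm⟩
    · exact Or.inr ⟨j.natAbs, by omega, h.symm⟩
  calc ∑ j ∈ Icc (-(M : ℤ)) M, f j.natAbs
      ≤ ∑ j ∈ P ∪ N, f j.natAbs := sum_le_sum_of_subset_of_nonneg hsub fun _ _ _ => hf _
    _ ≤ ∑ j ∈ P, f j.natAbs + ∑ j ∈ N, f j.natAbs := by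
        rw [← sum_union_inter]
        exact le_add_of_nonneg_right (sum_nonneg fun _ _ => hf _)
    _ = 2 * ∑ k ∈ r, f k := by
        rw [sum_image (by simp), sum_image (by simp)]
        simp only [Int.natAbs_natCast, Int.natAbs_neg]
        ring

theorem sum_Icc_inv_max_one_natAbs_le (M : ℕ) :
    ∑ j ∈ Icc (-(M : ℤ)) M, (max 1 (j.natAbs : ℝ))⁻¹ ≤ 2 * (2 + log M) := by
  have hharm : ∑ k ∈ range (M + 1), (max 1 (k : ℝ))⁻¹ = 1 + harmonic M := by
    rw [sum_range_succ', harmonic]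
    push_cast
    simp [add_comm]
  calc ∑ j ∈ Icc (-(M : ℤ)) M, (max 1 (j.natAbs : ℝ))⁻¹
      ≤ 2 * ∑ k ∈ range (M + 1), (max 1 (k : ℝ))⁻¹ :=
        sum_Icc_natAbs_le_two_mul_sum_range
          (fun _ => inv_nonneg.2 (zero_le_one.trans (le_max_left _ _))) M
    _ ≤ 2 * (2 + log M) := by
        rw [hharm]
        linarith [harmonic_le_one_add_log M]

theorem tendsto_const_add_log_add_div_natCast (a K : ℝ) :
    Tendsto (fun n : ℕ => (a + log (n + K)) / n) atTop (𝓝 0) := by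
  have hlog : Tendsto (fun n : ℕ => log (n + K) / n) atTop (𝓝 0) :=
    ((tendsto_pow_log_div_mul_add_atTop 1 (-K) 1 one_ne_zero).comp
      (tendsto_atTop_add_const_right atTop K tendsto_natCast_atTop_atTop)).congr fun n => by simp
  simpa [add_div] using (tendsto_const_div_atTop_nhds_zero_nat a).add hlog

/-- `θ_{nj}` depends on `j` only through `|j|`, so it is indexed here by `m = |j| ∈ ℕ`. -/
noncomputable def jmAngle (n m : ℕ) : ℝ := π / 4 * min (√((m : ℝ) / n)) 1

theorem jmAngle_natAbs (n : ℕ) (j : ℤ) :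
    jmAngle n j.natAbs = π / 4 * min (√(((|j| : ℤ) : ℝ) / n)) 1 := by
  rw [jmAngle, Nat.cast_natAbs]

theorem jmAngle_nonneg (n m : ℕ) : 0 ≤ jmAngle n m := by
  unfold jmAngle; positivity

theorem jmAngle_le_pi_div_four (n m : ℕ) : jmAngle n m ≤ π / 4 :=
  mul_le_of_le_one_right (by positivity) (min_le_right _ _)

theorem abs_jmAngle_sub_jmAngle_le (n a b : ℕ) : |jmAngle n a - jmAngle n b| ≤ π / 4 :=
  abs_sub_le_of_nonneg_of_le (jmAngle_nonneg n a) (jmAngle_le_pi_div_four n a)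
    (jmAngle_nonneg n b) (jmAngle_le_pi_div_four n b)

theorem jmAngle_of_le {n m : ℕ} (hn : 0 < n) (h : n ≤ m) : jmAngle n m = π / 4 := by
  have : 1 ≤ √((m : ℝ) / n) :=
    one_le_sqrt.2 ((one_le_div (Nat.cast_pos.2 hn)).2 (Nat.cast_le.2 h))
  rw [jmAngle, min_eq_right this, mul_one]

theorem sq_jmAngle_sub_jmAngle_le (n a b : ℕ) :
    (jmAngle n a - jmAngle n b) ^ 2 ≤ (π / 4) ^ 2 * ((a : ℝ) - b) ^ 2 / (n * max 1 (a : ℝ)) := by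
  have hmin : (min (√((a : ℝ) / n)) 1 - min (√((b : ℝ) / n)) 1) ^ 2 ≤
      (√((a : ℝ) / n) - √((b : ℝ) / n)) ^ 2 :=
    sq_le_sq.2 ((abs_min_sub_min_le_max _ _ _ _).trans (by simp))
  have hsqrt : (√a - √b) ^ 2 ≤ ((a : ℝ) - b) ^ 2 / max 1 (a : ℝ) :=
    (le_div_iff₀ (by positivity)).2 (sq_sqrt_sub_sqrt_mul_max_one_le a b)
  calc (jmAngle n a - jmAngle n b) ^ 2
      = (π / 4) ^ 2 * (min (√((a : ℝ) / n)) 1 - min (√((b : ℝ) / n)) 1) ^ 2 := by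
        rw [jmAngle, jmAngle]; ring
    _ ≤ (π / 4) ^ 2 * ((√a - √b) ^ 2 / n) := by
        gcongr
        exact hmin.trans_eq (by rw [sqrt_div (Nat.cast_nonneg _), sqrt_div (Nat.cast_nonneg _),
          ← sub_div, div_pow, sq_sqrt (Nat.cast_nonneg _)])
    _ ≤ (π / 4) ^ 2 * (((a : ℝ) - b) ^ 2 / max 1 (a : ℝ) / n) := by gcongr
    _ = (π / 4) ^ 2 * ((a : ℝ) - b) ^ 2 / (n * max 1 (a : ℝ)) := by
        rw [div_div, mul_comm (max _ _)]; ring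

section Displacement

variable {k : ℤ → ℤ} {K : ℕ}

theorem sum_sq_jmAngle_sub_le (hK : ∀ j, |(j.natAbs : ℝ) - (k j).natAbs| ≤ K) (n M : ℕ) :
    ∑ j ∈ Icc (-(M : ℤ)) M, (jmAngle n j.natAbs - jmAngle n (k j).natAbs) ^ 2 ≤
      2 * ((π / 4) ^ 2 * K ^ 2 * ((2 + log M) / n)) := by
  have hterm : ∀ j, (jmAngle n j.natAbs - jmAngle n (k j).natAbs) ^ 2 ≤
      (π / 4) ^ 2 * K ^ 2 / n * (max 1 (j.natAbs : ℝ))⁻¹ := fun j =>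
    calc (jmAngle n j.natAbs - jmAngle n (k j).natAbs) ^ 2
        ≤ (π / 4) ^ 2 * ((j.natAbs : ℝ) - (k j).natAbs) ^ 2 / (n * max 1 (j.natAbs : ℝ)) :=
          sq_jmAngle_sub_jmAngle_le _ _ _
      _ ≤ (π / 4) ^ 2 * K ^ 2 / (n * max 1 (j.natAbs : ℝ)) := by
          gcongr (π / 4) ^ 2 * ?_ / _
          exact sq_le_sq.2 ((hK j).trans (le_abs_self _))
      _ = (π / 4) ^ 2 * K ^ 2 / n * (max 1 (j.natAbs : ℝ))⁻¹ := by
          rw [div_mul_eq_div_div, div_eq_mul_inv _ (max _ _)]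
  calc ∑ j ∈ Icc (-(M : ℤ)) M, (jmAngle n j.natAbs - jmAngle n (k j).natAbs) ^ 2
      ≤ ∑ j ∈ Icc (-(M : ℤ)) M, (π / 4) ^ 2 * K ^ 2 / n * (max 1 (j.natAbs : ℝ))⁻¹ :=
        sum_le_sum fun j _ => hterm j
    _ = (π / 4) ^ 2 * K ^ 2 / n * ∑ j ∈ Icc (-(M : ℤ)) M, (max 1 (j.natAbs : ℝ))⁻¹ :=
        (mul_sum _ _ _).symm
    _ ≤ (π / 4) ^ 2 * K ^ 2 / n * (2 * (2 + log M)) := by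
        gcongr
        exact sum_Icc_inv_max_one_natAbs_le M
    _ = 2 * ((π / 4) ^ 2 * K ^ 2 * ((2 + log M) / n)) := by ring

theorem jmAngle_sub_eq_zero_of_lt (hK : ∀ j, |(j.natAbs : ℝ) - (k j).natAbs| ≤ K)
    {n : ℕ} (hn : 0 < n) {j : ℤ} (hj : n + K < j.natAbs) :
    jmAngle n j.natAbs - jmAngle n (k j).natAbs = 0 := by
  have hkj : (n : ℝ) ≤ (k j).natAbs := by
    have hjR : ((n + K : ℕ) : ℝ) < j.natAbs := Nat.cast_lt.2 hj
    push_cast at hjR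
    linarith [(abs_le.1 (hK j)).2]
  rw [jmAngle_of_le hn (by omega), jmAngle_of_le hn (Nat.cast_le.1 hkj), sub_self]

theorem tprod_cos_jmAngle_sub_mem_Icc (hK : ∀ j, |(j.natAbs : ℝ) - (k j).natAbs| ≤ K)
    {n : ℕ} (hn : 0 < n) :
    ∏' j, cos (jmAngle n j.natAbs - jmAngle n (k j).natAbs) ∈
      Set.Icc (1 - (π / 4) ^ 2 * K ^ 2 * ((2 + log (n + K)) / n)) 1 := by
  set s := Icc (-((n + K : ℕ) : ℤ)) (n + K : ℕ)
  have hsupp : ∀ j ∉ s, cos (jmAngle n j.natAbs - jmAngle n (k j).natAbs) = 1 := by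
    intro j hj
    simp only [s, mem_Icc, not_and_or, not_le] at hj
    rw [jmAngle_sub_eq_zero_of_lt hK hn (by omega), cos_zero]
  have hx : ∀ j, |jmAngle n j.natAbs - jmAngle n (k j).natAbs| ≤ π / 4 := fun j =>
    abs_jmAngle_sub_jmAngle_le _ _ _
  have hx2 : ∀ j, (jmAngle n j.natAbs - jmAngle n (k j).natAbs) ^ 2 ≤ 2 := fun j =>
    calc _ = |jmAngle n j.natAbs - jmAngle n (k j).natAbs| ^ 2 := (sq_abs _).symm
      _ ≤ (π / 4) ^ 2 := by gcongr; exact hx j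
      _ ≤ 2 := by nlinarith [pi_pos, pi_le_four]
  have hsum := sum_sq_jmAngle_sub_le hK n (n + K)
  rw [Nat.cast_add (R := ℝ)] at hsum
  rw [tprod_eq_prod hsupp]
  refine ⟨?_, prod_cos_le_one s fun j _ => (hx j).trans (by linarith [pi_pos])⟩
  calc 1 - (π / 4) ^ 2 * K ^ 2 * ((2 + log (n + K)) / n)
      ≤ 1 - ∑ j ∈ s, (jmAngle n j.natAbs - jmAngle n (k j).natAbs) ^ 2 / 2 := by
        rw [← sum_div]; linarith
    _ ≤ ∏ j ∈ s, cos (jmAngle n j.natAbs - jmAngle n (k j).natAbs) :=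
        one_sub_sum_sq_div_two_le_prod_cos s fun j _ => hx2 j

end Displacement

/-- Juschenko–Monod computation: with
`θ_{nj} = (π/4)·min(√(|j|/n), 1)`, for any permutation `g` of `ℤ` with
`sup_j ||g j| − |j|| < ∞`, the product `∏_j cos(θ_{nj} − θ_{n,g(j)})` tends to `1`. -/
theorem statement19 (g : Equiv.Perm ℤ)
    (hg : ∃ c : ℤ, ∀ j : ℤ, abs (|g j| - |j|) ≤ c) :
    Tendsto (fun n : ℕ => ∏' j : ℤ,
        Real.cos (π / 4 * min (Real.sqrt (((|j| : ℤ) : ℝ) / n)) 1 -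
          π / 4 * min (Real.sqrt (((|g j| : ℤ) : ℝ) / n)) 1))
      atTop (nhds 1) := by
  obtain ⟨c, hc⟩ := hg
  have hK : ∀ j, |(j.natAbs : ℝ) - (g j).natAbs| ≤ c.toNat := by
    intro j
    rw [Nat.cast_natAbs, Nat.cast_natAbs, abs_sub_comm]
    exact_mod_cast (hc j).trans (Int.self_le_toNat c)
  simp only [← jmAngle_natAbs]
  refine tendsto_of_tendsto_of_tendsto_of_le_of_le' ?_ tendsto_const_nhds
    (eventually_gt_atTop 0 |>.mono fun n hn => (tprod_cos_jmAngle_sub_mem_Icc hK hn).1)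
    (eventually_gt_atTop 0 |>.mono fun n hn => (tprod_cos_jmAngle_sub_mem_Icc hK hn).2)
  simpa using ((tendsto_const_add_log_add_div_natCast 2 c.toNat).const_mul
    ((π / 4) ^ 2 * (c.toNat : ℝ) ^ 2)).const_sub 1
end
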